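/- arXiv:2510.15498 — 14 statements merged into one kernel-verified Lean document; each statement's English description precedes it below -/
import Mathlib

section
/- Let u be a complex number with u^4 = 1 and let t be a Gaussian integer with |t| > 2. Then the polynomial f(X) = X^2 - tX + u has two distinct complex roots α, β with |α| < 1 and |β| > 1. -/
/-- For `u ∈ ℂ` with `u⁴ = 1` and a Gaussian integer `t` with `|t| > 2`, the polynomial
`X² - tX + u` has two distinct roots `α`, `β` with `|α| < 1 < |β|`. -/
theorem stmt_0 (u : ℂ) (hu : u ^ 4 = 1) (t : ℂ)
    (ht : ∃ a b : ℤ, t = (a : ℂ) + (b : ℂ) * Complex.I)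
    (habs : 2 < ‖t‖) :
    ∃ α β : ℂ, α ≠ β ∧ (∀ z : ℂ, z ^ 2 - t * z + u = (z - α) * (z - β)) ∧
      ‖α‖ < 1 ∧ 1 < ‖β‖ := by
  obtain ⟨s, hs⟩ := IsAlgClosed.exists_pow_nat_eq (t ^ 2 - 4 * u) (n := 2) two_pos
  set α0 : ℂ := (t - s) / 2 with hα0
  set β0 : ℂ := (t + s) / 2 with hβ0
  have hsum : α0 + β0 = t := by rw [hα0, hβ0]; ring
  have hprod : α0 * β0 = u := by
    rw [hα0, hβ0]
    have : (t - s) / 2 * ((t + s) / 2) = (t ^ 2 - s ^ 2) / 4 := by ring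
    rw [this, hs]; ring
  have hfac : ∀ z : ℂ, z ^ 2 - t * z + u = (z - α0) * (z - β0) := by
    intro z
    have h : (z - α0) * (z - β0) = z ^ 2 - (α0 + β0) * z + α0 * β0 := by ring
    rw [h, hsum, hprod]
  have habsu : ‖u‖ = 1 := by
    have h4 : (‖u‖) ^ 4 = 1 ^ 4 := by rw [← norm_pow, hu, norm_one, one_pow]
    exact (pow_left_strictMonoOn₀ (by norm_num : (4:ℕ) ≠ 0)).injOn
      (norm_nonneg u) (by norm_num : (0:ℝ) ≤ 1) h4
  set a := ‖α0‖ with ha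
  set b := ‖β0‖ with hb
  have hab : a * b = 1 := by rw [ha, hb, ← norm_mul, hprod, habsu]
  have hsum2 : 2 < a + b := by
    have := norm_add_le α0 β0
    rw [hsum] at this
    linarith
  have ha0 : 0 ≤ a := norm_nonneg _
  have hb0 : 0 ≤ b := norm_nonneg _
  rcases le_or_gt a b with h | h
  · have hb1 : 1 < b := by nlinarith
    have ha1 : a < 1 := by nlinarith
    refine ⟨α0, β0, fun he => ?_, hfac, ha1, hb1⟩
    have : a = b := by rw [ha, hb, he]
    linarith
  · have ha1 : 1 < a := by nlinarith
    have hb1 : b < 1 := by nlinarith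
    refine ⟨β0, α0, fun he => by
      have : b = a := by rw [ha, hb, he]
      linarith, ?_, hb1, ha1⟩
    intro z
    rw [hfac z]; ring
end

section
/- Let t, u be complex numbers with |u| = 1 and t = x + iy where x, y are integers with |x| ≥ 3 or |y| ≥ 3. Then the root α = (t/2)(1 - √(1 - 4u/t²)) of X² - tX + u (with the principal branch of the square root) satisfies |α| < 1/2, and the other root β = t - α satisfies |β - t| < 1/2. -/
/-- For `|u| = 1` and `t = x + iy` with integers `x`, `y` satisfying `|x| ≥ 3` or `|y| ≥ 3`,
the root `α = (t/2)(1 - √(1 - 4u/t²))` of `X² - tX + u` (principal square root) satisfies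
`|α| < 1/2`, and the other root `β = t - α` satisfies `|β - t| < 1/2`. -/
theorem stmt_1 (t u : ℂ) (hu : ‖u‖ = 1) (x y : ℤ)
    (ht : t = (x : ℂ) + (y : ℂ) * Complex.I) (hxy : 3 ≤ |x| ∨ 3 ≤ |y|) :
    ‖t / 2 * (1 - (1 - 4 * u / t ^ 2) ^ ((1 : ℂ) / 2))‖ < 1 / 2 ∧
    ‖(t - t / 2 * (1 - (1 - 4 * u / t ^ 2) ^ ((1 : ℂ) / 2))) - t‖ < 1 / 2 := by
  -- |t| ≥ 3
  have hsq : ‖t‖ ^ 2 = (x : ℝ) ^ 2 + (y : ℝ) ^ 2 := by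
    rw [← Complex.normSq_eq_norm_sq, ht]
    simp [Complex.normSq_apply]
    ring
  have h9 : (9 : ℝ) ≤ ‖t‖ ^ 2 := by
    rw [hsq]
    rcases hxy with h | h
    · have : (3 : ℝ) ≤ |(x : ℝ)| := by exact_mod_cast (by exact_mod_cast h : (3:ℤ) ≤ |x|)
      nlinarith [sq_nonneg (y : ℝ), sq_abs (x : ℝ)]
    · have : (3 : ℝ) ≤ |(y : ℝ)| := by exact_mod_cast (by exact_mod_cast h : (3:ℤ) ≤ |y|)
      nlinarith [sq_nonneg (x : ℝ), sq_abs (y : ℝ)]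
  have ht3 : (3 : ℝ) ≤ ‖t‖ := by
    nlinarith [norm_nonneg t]
  have ht0 : t ≠ 0 := by
    intro h; rw [h] at ht3; simp at ht3; linarith
  set s : ℂ := (1 - 4 * u / t ^ 2) ^ ((1 : ℂ) / 2) with hs
  set α : ℂ := t / 2 * (1 - s) with hα
  set β : ℂ := t / 2 * (1 + s) with hβ
  -- s² = 1 - 4u/t²
  have hs2 : s ^ 2 = 1 - 4 * u / t ^ 2 := by
    rw [hs]
    have : (1 : ℂ) / 2 = ((2 : ℕ) : ℂ)⁻¹ := by norm_num
    rw [this]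
    exact Complex.cpow_nat_inv_pow _ two_ne_zero
  -- α * β = u
  have hmul : α * β = u := by
    rw [hα, hβ]
    have : t / 2 * (1 - s) * (t / 2 * (1 + s)) = t ^ 2 / 4 * (1 - s ^ 2) := by ring
    rw [this, hs2]
    field_simp
    ring
  -- α + β = t
  have hadd : α + β = t := by rw [hα, hβ]; ring
  -- Re s ≥ 0 so |1 - s| ≤ |1 + s|, i.e. |α| ≤ |β|
  have hre : 0 ≤ s.re := by
    rw [hs]
    have : (1 : ℂ) / 2 = (2⁻¹ : ℂ) := by norm_num
    rw [this, Complex.cpow_inv_two_re]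
    exact Real.sqrt_nonneg _
  have hab : ‖α‖ ≤ ‖β‖ := by
    rw [hα, hβ, norm_mul, norm_mul]
    apply mul_le_mul_of_nonneg_left _ (norm_nonneg _)
    have h1 : ‖1 - s‖ ^ 2 ≤ ‖1 + s‖ ^ 2 := by
      rw [Complex.sq_norm, Complex.sq_norm, Complex.normSq_apply, Complex.normSq_apply]
      simp only [Complex.add_re, Complex.add_im, Complex.sub_re, Complex.sub_im,
        Complex.one_re, Complex.one_im]
      nlinarith
    nlinarith [norm_nonneg (1 - s), norm_nonneg (1 + s)]
  set a := ‖α‖ with ha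
  set b := ‖β‖ with hb
  have hab1 : a * b = 1 := by rw [ha, hb, ← norm_mul, hmul, hu]
  have ha0 : 0 < a := by
    have hne : a ≠ 0 := by intro h; rw [h] at hab1; simp at hab1
    exact lt_of_le_of_ne (norm_nonneg α) (Ne.symm hne)
  have htab : ‖t‖ ≤ a + b := by
    calc ‖t‖ = ‖α + β‖ := by rw [hadd]
    _ ≤ a + b := norm_add_le _ _
  have key : a < 1 / 2 := by
    by_contra h
    push_neg at h
    have ha1 : a ≤ 1 := by nlinarith
    nlinarith
  constructor
  · exact key
  · have h2 : t - α - t = -α := by ring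
    rw [h2, norm_neg]
    exact key
end

section
/- Define h₀ := T and h_{n+1} := h_n² - 2U^{2^n} in the field of rational functions Q(T,U), and let F(X) := (X² - U)/(2X - T) be the Newton iterator of f = X² - TX + U. Then for every n ≥ 0, the identity F^{(n+1)}(0) - F^{(n)}(0) = U^{2^n}/(h₀ h₁ ⋯ h_n) holds in Q(T,U), where F^{(n)} denotes the n-fold iterate of F (with F^{(0)}(X) = X). -/
noncomputable section
namespace Paper
open MvPolynomial Finset

abbrev K : Type := FractionRing (MvPolynomial (Fin 2) ℚ)

def T : K := algebraMap (MvPolynomial (Fin 2) ℚ) K (X 0)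
def U : K := algebraMap (MvPolynomial (Fin 2) ℚ) K (X 1)

/-- The Newton iterator of `f = X² - T·X + U`. -/
def F (x : K) : K := (x ^ 2 - U) / (2 * x - T)

/-- `h 0 = T`, `h (n+1) = h n ² - 2 U^(2^n)`. -/
def h : ℕ → K
  | 0 => T
  | n + 1 => h n ^ 2 - 2 * U ^ 2 ^ n

/-- Polynomial version of `h`. -/
def hp : ℕ → MvPolynomial (Fin 2) ℚ
  | 0 => X 0
  | n + 1 => hp n ^ 2 - 2 * (X 1) ^ 2 ^ n

lemma h_eq (n : ℕ) : h n = algebraMap (MvPolynomial (Fin 2) ℚ) K (hp n) := by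
  induction n with
  | zero => rfl
  | succ n ih =>
      show h n ^ 2 - 2 * U ^ 2 ^ n = _
      rw [show hp (n+1) = hp n ^ 2 - 2 * (X 1) ^ 2 ^ n from rfl]
      rw [map_sub, map_mul, map_pow, map_pow, ← ih, map_ofNat]
      rfl

lemma hp_aeval (n : ℕ) :
    aeval (fun i : Fin 2 => if i = 0 then (X 0 : MvPolynomial (Fin 2) ℚ) else 0) (hp n)
      = X 0 ^ 2 ^ n := by
  induction n with
  | zero => simp [hp]
  | succ n ih =>
      rw [show hp (n+1) = hp n ^ 2 - 2 * (X 1) ^ 2 ^ n from rfl]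
      rw [map_sub, map_mul, map_pow, map_pow, ih, aeval_X]
      simp [zero_pow (pow_ne_zero n two_ne_zero), pow_succ, pow_mul]

lemma hp_ne (n : ℕ) : hp n ≠ 0 := by
  intro hz
  have := hp_aeval n
  rw [hz, map_zero] at this
  exact pow_ne_zero _ (X_ne_zero 0) this.symm

lemma h_ne (n : ℕ) : h n ≠ 0 := by
  rw [h_eq]
  exact (map_ne_zero_iff _ (IsFractionRing.injective (MvPolynomial (Fin 2) ℚ) K)).mpr (hp_ne n)

def e : ℕ → K
  | 0 => 0
  | n + 1 => e n * h n + U ^ (2 ^ n - 1)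

def d (n : ℕ) : K := ∏ m ∈ Finset.range n, h m

lemma d_succ (n : ℕ) : d (n + 1) = d n * h n := Finset.prod_range_succ _ _

lemma d_ne (n : ℕ) : d n ≠ 0 := Finset.prod_ne_zero_iff.mpr fun m _ => h_ne m

lemma Upow (n : ℕ) : U ^ (2 ^ n - 1) * U = U ^ 2 ^ n := by
  rw [← pow_succ, Nat.sub_add_cancel Nat.one_le_two_pow]

lemma Upow2 (n : ℕ) : U ^ 2 ^ n * U ^ (2 ^ n - 1) = U ^ (2 ^ (n + 1) - 1) := by
  rw [← pow_add]
  congr 1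
  have : 1 ≤ 2 ^ n := Nat.one_le_two_pow
  rw [pow_succ]
  omega

lemma hTd (n : ℕ) : h n = T * d n - 2 * U * e n := by
  induction n with
  | zero => simp [h, d, e]
  | succ n ih =>
      rw [show h (n+1) = h n ^ 2 - 2 * U ^ 2 ^ n from rfl,
        show e (n+1) = e n * h n + U ^ (2 ^ n - 1) from rfl, d_succ]
      linear_combination h n * ih + 2 * Upow n

lemma keyC (n : ℕ) : d n ^ 2 - T * e n * d n + U * e n ^ 2 = U ^ (2 ^ n - 1) := by
  induction n with
  | zero => simp [d, e]
  | succ n ih =>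
      rw [show e (n+1) = e n * h n + U ^ (2 ^ n - 1) from rfl, d_succ]
      linear_combination (h n) ^ 2 * ih + U ^ (2 ^ n - 1) * h n * hTd n +
        U ^ (2 ^ n - 1) * Upow n + Upow2 n

lemma iter_eq (n : ℕ) : F^[n] 0 = U * e n / d n := by
  induction n with
  | zero => simp [d, e]
  | succ n ih =>
      have hd : 2 * (U * e n / d n) - T ≠ 0 := by
        have hval : 2 * (U * e n / d n) - T = -h n / d n := by
          rw [hTd n]
          field_simp [d_ne n]
          ring
        rw [hval]
        exact div_ne_zero (neg_ne_zero.mpr (h_ne n)) (d_ne n)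
      rw [Function.iterate_succ_apply', ih,
        show e (n+1) = e n * h n + U ^ (2 ^ n - 1) from rfl, d_succ, F,
        div_eq_div_iff hd (mul_ne_zero (d_ne n) (h_ne n))]
      field_simp [d_ne n, h_ne n]
      ring_nf
      linear_combination (-(U * h n)) * keyC n +
        (-(U * U ^ (2 ^ n - 1))) * hTd n

theorem stmt_2 (n : ℕ) :
    F^[n + 1] 0 - F^[n] 0 = U ^ 2 ^ n / ∏ m ∈ Finset.range (n + 1), h m := by
  have hprod : ∏ m ∈ Finset.range (n + 1), h m = d (n + 1) := rfl
  rw [hprod, iter_eq (n + 1), iter_eq n,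
    show e (n+1) = e n * h n + U ^ (2 ^ n - 1) from rfl, d_succ]
  field_simp [d_ne n, h_ne n]
  ring_nf
  linear_combination Upow n

end Paper
end
end

section
/- Let p_n, q_n be the continuant sequences in Q(T,U) given by p_{-2}=0, p_{-1}=1, q_{-2}=1, q_{-1}=0, p_n = a_n p_{n-1} + p_{n-2}, q_n = a_n q_{n-1} + q_{n-2}, where a₀ = 0, a_n = U^{-1}T for odd n ≥ 1, and a_n = -T for even n ≥ 2. Then p_n = q_{n-1} for odd n ≥ -1 and p_n = -U·q_{n-1} for even n ≥ 0. -/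
noncomputable section
namespace Paper
open MvPolynomial Finset

/-- Partial denominators: `a 0 = 0`, `a n = U⁻¹T` for odd `n`, `a n = -T` for even `n ≥ 2`. -/
def a (n : ℕ) : K := if n = 0 then 0 else if Odd n then U⁻¹ * T else -T

/-- Partial denominators: `b n = T` for even `n`, `b n = -U⁻¹T` for odd `n`. -/
def b (n : ℕ) : K := if Odd n then -(U⁻¹ * T) else T

/-- Continuant numerators, shifted by 2: `P k = p_{k-2}`, so `P 0 = p_{-2} = 0`,
`P 1 = p_{-1} = 1`, `P (n+2) = p_n = a n • p_{n-1} + p_{n-2}`. -/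
def P : ℕ → K
  | 0 => 0
  | 1 => 1
  | n + 2 => a n * P (n + 1) + P n

/-- Continuant denominators, shifted by 2: `Q k = q_{k-2}`. -/
def Q : ℕ → K
  | 0 => 1
  | 1 => 0
  | n + 2 => a n * Q (n + 1) + Q n

/-- Continuant numerators for the `b`-continued fraction, shifted by 2: `R k = r_{k-2}`. -/
def R : ℕ → K
  | 0 => 0
  | 1 => 1
  | n + 2 => b n * R (n + 1) + R n

/-- Continuant denominators for the `b`-continued fraction, shifted by 2: `Sd k = s_{k-2}`. -/
def Sd : ℕ → K
  | 0 => 1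
  | 1 => 0
  | n + 2 => b n * Sd (n + 1) + Sd n

lemma U_ne_zero : U ≠ 0 := by
  have : (X 1 : MvPolynomial (Fin 2) ℚ) ≠ 0 := X_ne_zero 1
  simp [U, map_eq_zero_iff _
    (IsFractionRing.injective (MvPolynomial (Fin 2) ℚ) K), this]

lemma a_odd (k : ℕ) : a (2 * k + 1) = U⁻¹ * T := by
  simp [a, Nat.odd_iff]

lemma a_even (k : ℕ) : a (2 * k + 2) = -T := by
  simp [a, Nat.odd_iff]

/-- `p_n = q_{n-1}` for odd `n ≥ -1` (i.e. `n = 2j-1`) and `p_n = -U q_{n-1}` for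
even `n ≥ 0` (i.e. `n = 2j`), stated with the index shift `P k = p_{k-2}`, `Q k = q_{k-2}`. -/
theorem stmt_6 (j : ℕ) :
    P (2 * j + 1) = Q (2 * j) ∧ P (2 * j + 2) = -U * Q (2 * j + 1) := by
  induction j with
  | zero => simp [P, Q, a]
  | succ n ih =>
    obtain ⟨h1, h2⟩ := ih
    have key1 : P (2 * (n + 1) + 1) = Q (2 * (n + 1)) := by
      have e1 : 2 * (n + 1) + 1 = (2 * n + 1) + 2 := by ring
      have e2 : 2 * (n + 1) = 2 * n + 2 := by ring
      rw [e1, e2]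
      show a (2 * n + 1) * P (2 * n + 2) + P (2 * n + 1)
          = a (2 * n) * Q (2 * n + 1) + Q (2 * n)
      rw [a_odd, h1, h2]
      cases n with
      | zero => simp [a, Q, P]
      | succ m =>
        have : a (2 * (m + 1)) = -T := a_even m
        rw [this]
        field_simp [U_ne_zero]
    refine ⟨key1, ?_⟩
    have e1 : 2 * (n + 1) + 2 = (2 * n + 2) + 2 := by ring
    have e3 : 2 * (n + 1) + 1 = (2 * n + 1) + 2 := by ring
    rw [e1, e3]
    show a (2 * n + 2) * P (2 * n + 2 + 1) + P (2 * n + 2)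
        = -U * (a (2 * n + 1) * Q (2 * n + 1 + 1) + Q (2 * n + 1))
    have e4 : 2 * n + 2 + 1 = 2 * (n + 1) + 1 := by ring
    have e5 : 2 * n + 1 + 1 = 2 * (n + 1) := by ring
    rw [e4, e5, key1, a_odd, show (2:ℕ) * (n + 1) = 2 * n + 2 from by ring, a_even, h2]
    field_simp [U_ne_zero]
    ring

end Paper
end
end

section
/- Let r_n, s_n be the continuant sequences in Q(T,U) given by r_{-2}=0, r_{-1}=1, s_{-2}=1, s_{-1}=0, r_n = b_n r_{n-1} + r_{n-2}, s_n = b_n s_{n-1} + s_{n-2}, where b_n = -U^{-1}T for odd n ≥ 1 and b_n = T for even n ≥ 0. Then r_n = s_{n+1} for odd n ≥ -1 and r_n = -U·s_{n+1} for even n ≥ 0. -/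
noncomputable section
namespace Paper
open MvPolynomial Finset

lemma b_even (n : ℕ) : b (2 * n) = T := by
  simp [b, Nat.odd_iff, Nat.mul_mod_right]

lemma b_odd (n : ℕ) : b (2 * n + 1) = -(U⁻¹ * T) := by
  simp [b, Nat.odd_iff, Nat.add_mul_mod_self_left]

/-- `r_n = s_{n+1}` for odd `n ≥ -1` (i.e. `n = 2j-1`) and `r_n = -U s_{n+1}` for
even `n ≥ 0` (i.e. `n = 2j`), stated with the index shift `R k = r_{k-2}`, `Sd k = s_{k-2}`. -/
theorem stmt_7 (j : ℕ) :
    R (2 * j + 1) = Sd (2 * j + 2) ∧ R (2 * j + 2) = -U * Sd (2 * j + 3) := by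
  have hU : U⁻¹ * U = 1 := inv_mul_cancel₀ U_ne_zero
  induction j with
  | zero =>
    constructor
    · show R 1 = Sd 2
      have : Sd 2 = b 0 * Sd 1 + Sd 0 := rfl
      simp [R, this, Sd, b]
    · show R 2 = -U * Sd 3
      have h2 : R 2 = b 0 * R 1 + R 0 := rfl
      have h3 : Sd 3 = b 1 * Sd 2 + Sd 1 := rfl
      have h2' : Sd 2 = b 0 * Sd 1 + Sd 0 := rfl
      have hb1 : b 1 = -(U⁻¹ * T) := b_odd 0
      rw [h2, h3, h2', hb1]
      simp [R, Sd, b]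
      field_simp [U_ne_zero]
  | succ j ih =>
    obtain ⟨ih1, ih2⟩ := ih
    have key : 2 * (j + 1) = 2 * j + 2 := by ring
    have e1 : R (2 * j + 3) = b (2 * j + 1) * R (2 * j + 2) + R (2 * j + 1) := rfl
    have e2 : Sd (2 * j + 4) = b (2 * j + 2) * Sd (2 * j + 3) + Sd (2 * j + 2) := rfl
    have e3 : R (2 * j + 4) = b (2 * j + 2) * R (2 * j + 3) + R (2 * j + 2) := rfl
    have e4 : Sd (2 * j + 5) = b (2 * j + 3) * Sd (2 * j + 4) + Sd (2 * j + 3) := rfl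
    have hb1 : b (2 * j + 1) = -(U⁻¹ * T) := b_odd j
    have hb2 : b (2 * j + 2) = T := by have := b_even (j + 1); rwa [show 2*(j+1) = 2*j+2 by ring] at this
    have hb3 : b (2 * j + 3) = -(U⁻¹ * T) := by have := b_odd (j + 1); rwa [show 2*(j+1)+1 = 2*j+3 by ring] at this
    have step1 : R (2 * j + 3) = Sd (2 * j + 4) := by
      rw [e1, e2, hb1, hb2, ih2, ih1]
      field_simp [U_ne_zero]
    constructor
    · show R (2 * (j+1) + 1) = Sd (2 * (j+1) + 2)
      rw [key]
      convert step1 using 2 <;> ring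
    · show R (2 * (j+1) + 2) = -U * Sd (2 * (j+1) + 3)
      rw [key]
      have : R (2 * j + 4) = -U * Sd (2 * j + 5) := by
        rw [e3, e4, hb2, hb3, step1, ih2]
        field_simp [U_ne_zero]
        ring
      convert this using 2 <;> ring

end Paper
end
end

section
/- Let t, u be complex numbers with |t| > 2 and |u| = 1. Define h₀ := t, h_{n+1} := h_n² - 2u^{2^n}, and g₀ := |t|, g_{n+1} := g_n² - 2. Then for all n ≥ 0: |h_n| > 2, g_n > 2, and |h_n| ≥ g_n = ρ^{2^n} + ρ^{-2^n}, where ρ := (|t| + √(|t|² - 4))/2 > 1. -/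
lemma aux_two_lt (a : ℝ) (ha : 1 < a) : 2 < a + a⁻¹ := by
  have h0 : 0 < a := by linarith
  have h1 : a * a⁻¹ = 1 := mul_inv_cancel₀ (ne_of_gt h0)
  nlinarith [mul_pos (sub_pos.mpr ha) (sub_pos.mpr ha)]

/-- For `t, u ∈ ℂ` with `|t| > 2` and `|u| = 1`, and the sequences `h₀ = t`,
`h_{n+1} = h_n² - 2u^(2^n)` in `ℂ` and `g₀ = |t|`, `g_{n+1} = g_n² - 2` in `ℝ`:
`ρ = (|t| + √(|t|²-4))/2 > 1` and for all `n`, `|h_n| > 2`, `g_n > 2`, and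
`|h_n| ≥ g_n = ρ^(2^n) + ρ^(-2^n)`. -/
theorem stmt_11 (t u : ℂ) (ht : 2 < ‖t‖) (hu : ‖u‖ = 1)
    (h : ℕ → ℂ) (h0 : h 0 = t) (hrec : ∀ n, h (n + 1) = h n ^ 2 - 2 * u ^ 2 ^ n)
    (g : ℕ → ℝ) (g0 : g 0 = ‖t‖) (grec : ∀ n, g (n + 1) = g n ^ 2 - 2)
    (ρ : ℝ) (hρ : ρ = (‖t‖ + Real.sqrt (‖t‖ ^ 2 - 4)) / 2) :
    1 < ρ ∧ ∀ n : ℕ, 2 < ‖h n‖ ∧ 2 < g n ∧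
      g n ≤ ‖h n‖ ∧ g n = ρ ^ 2 ^ n + (ρ ^ 2 ^ n)⁻¹ := by
  set T := ‖t‖ with hT
  have hD : (0:ℝ) ≤ T ^ 2 - 4 := by nlinarith
  have hs : Real.sqrt (T ^ 2 - 4) ^ 2 = T ^ 2 - 4 := Real.sq_sqrt hD
  have hs0 : 0 ≤ Real.sqrt (T ^ 2 - 4) := Real.sqrt_nonneg _
  have hρ1 : 1 < ρ := by rw [hρ]; nlinarith
  have hρ0 : ρ ≠ 0 := by positivity
  have hsum : ρ + ρ⁻¹ = T := by
    have hq : ρ ^ 2 - T * ρ + 1 = 0 := by rw [hρ]; field_simp; nlinarith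
    field_simp
    nlinarith
  refine ⟨hρ1, ?_⟩
  intro n
  induction n with
  | zero =>
    have h1 : g 0 = ρ ^ 2 ^ 0 + (ρ ^ 2 ^ 0)⁻¹ := by
      simp [g0, hsum.symm]
    refine ⟨by simpa [h0] using ht, by rw [g0]; exact ht, by rw [g0, h0], h1⟩
  | succ n ih =>
    obtain ⟨ih1, ih2, ih3, ih4⟩ := ih
    have hpow1 : 1 < ρ ^ 2 ^ n := one_lt_pow₀ hρ1 (by positivity)
    have hpow1' : 1 < ρ ^ 2 ^ (n+1) := one_lt_pow₀ hρ1 (by positivity)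
    have hg4 : g (n+1) = ρ ^ 2 ^ (n+1) + (ρ ^ 2 ^ (n+1))⁻¹ := by
      have key : ρ ^ 2 ^ (n+1) = (ρ ^ 2 ^ n) ^ 2 := by
        rw [← pow_mul, ← pow_succ]
      have hx : (ρ ^ 2 ^ n) ≠ 0 := by positivity
      rw [grec, ih4, key]
      field_simp
      ring
    have hg2 : 2 < g (n+1) := by rw [hg4]; exact aux_two_lt _ hpow1'
    have hle : g (n+1) ≤ ‖h (n+1)‖ := by
      rw [grec, hrec]
      calc g n ^ 2 - 2 ≤ ‖h n ^ 2‖ - ‖2 * u ^ 2 ^ n‖ := by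
            rw [norm_pow, norm_mul, norm_pow, hu]
            simp only [one_pow, mul_one, Complex.norm_two]
            nlinarith
        _ ≤ ‖h n ^ 2 - 2 * u ^ 2 ^ n‖ := by
            have h3 : ‖h n ^ 2‖ ≤
                ‖h n ^ 2 - 2 * u ^ 2 ^ n‖ + ‖2 * u ^ 2 ^ n‖ := by
              calc ‖h n ^ 2‖
                  = ‖(h n ^ 2 - 2 * u ^ 2 ^ n) + 2 * u ^ 2 ^ n‖ := by ring_nf
                _ ≤ _ := norm_add_le _ _
            linarith
    exact ⟨lt_of_lt_of_le hg2 hle, hg2, hle, hg4⟩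
end

section
/- Let t, u be complex numbers with |t| ≥ 3 (more precisely t = x + iy, x, y integers, |x| ≥ 3 or |y| ≥ 3) and u^4 = 1. Define h₀ := t, h_{n+1} := h_n² - 2u^{2^n}. Then for all n ≥ 0, using the principal square root, h_n² √(1 - 4u^{2^n}/h_n²) = h_{n+1} √(1 - 4u^{2^{n+1}}/h_{n+1}²). -/
lemma sqrt_re_pos {z : ℂ} (hz : 0 < z.re) : 0 < (z ^ ((1:ℂ)/2)).re := by
  have hz0 : z ≠ 0 := by intro h; simp [h] at hz
  rw [Complex.cpow_def_of_ne_zero hz0, Complex.exp_re]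
  apply mul_pos (Real.exp_pos _)
  have harg : |z.arg| < Real.pi / 2 :=
    Complex.abs_arg_lt_pi_div_two_iff.mpr (Or.inl hz)
  have him : (Complex.log z * (1/2)).im = z.arg / 2 := by
    simp [Complex.mul_im, Complex.log_im]; ring
  rw [him]
  obtain ⟨h1, h2⟩ := abs_lt.mp harg
  apply Real.cos_pos_of_mem_Ioo
  constructor <;> linarith [Real.pi_pos]

lemma sqrt_sq {z : ℂ} (hz : z ≠ 0) : (z ^ ((1:ℂ)/2))^2 = z := by
  rw [sq, ← Complex.cpow_add _ _ hz]
  norm_num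

/-- For `t = x + iy` with integers `x`, `y`, `|x| ≥ 3` or `|y| ≥ 3`, and `u⁴ = 1`, the
sequence `h₀ = t`, `h_{n+1} = h_n² - 2u^(2^n)` satisfies, with principal square roots,
`h_n² √(1 - 4u^(2^n)/h_n²) = h_{n+1} √(1 - 4u^(2^(n+1))/h_{n+1}²)` for all `n`. -/
theorem stmt_12 (t u : ℂ) (hu : u ^ 4 = 1) (x y : ℤ)
    (ht : t = (x : ℂ) + (y : ℂ) * Complex.I) (hxy : 3 ≤ |x| ∨ 3 ≤ |y|)
    (h : ℕ → ℂ) (h0 : h 0 = t) (hrec : ∀ n, h (n + 1) = h n ^ 2 - 2 * u ^ 2 ^ n) :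
    ∀ n : ℕ, h n ^ 2 * (1 - 4 * u ^ 2 ^ n / h n ^ 2) ^ ((1 : ℂ) / 2) =
      h (n + 1) * (1 - 4 * u ^ 2 ^ (n + 1) / h (n + 1) ^ 2) ^ ((1 : ℂ) / 2) := by
  have hu1 : Norm.norm u = 1 := by
    have h4 : Norm.norm u ^ 4 = 1 := by rw [← norm_pow, hu, norm_one]
    have ha : 0 ≤ Norm.norm u := norm_nonneg u
    nlinarith [sq_nonneg (Norm.norm u - 1), sq_nonneg (Norm.norm u + 1),
      sq_nonneg (Norm.norm u ^ 2 - 1)]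
  have habs : ∀ n, 3 ≤ Norm.norm (h n) := by
    intro n
    induction n with
    | zero =>
      rw [h0, ht]
      have h9 : (9:ℝ) ≤ Norm.norm ((x:ℂ) + (y:ℂ) * Complex.I) ^ 2 := by
        rw [Complex.sq_norm, show ((x:ℂ)) = (((x:ℝ)):ℂ) by norm_cast,
          show ((y:ℂ)) = (((y:ℝ)):ℂ) by norm_cast, Complex.normSq_add_mul_I]
        rcases hxy with hx | hy
        · have hx' : (3:ℝ) ≤ |(x:ℝ)| := by
            rw [← Int.cast_abs]; exact_mod_cast hx
          nlinarith [sq_nonneg ((y:ℝ)), sq_abs ((x:ℝ)), sq_nonneg (|(x:ℝ)| - 3)]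
        · have hy' : (3:ℝ) ≤ |(y:ℝ)| := by
            rw [← Int.cast_abs]; exact_mod_cast hy
          nlinarith [sq_nonneg ((x:ℝ)), sq_abs ((y:ℝ)), sq_nonneg (|(y:ℝ)| - 3)]
      nlinarith [norm_nonneg ((x:ℂ) + (y:ℂ) * Complex.I)]
    | succ n ih =>
      rw [hrec n]
      have h2u : Norm.norm (2 * u ^ 2 ^ n) = 2 := by
        rw [norm_mul, norm_pow, hu1, one_pow, Complex.norm_two, mul_one]
      have hle : Norm.norm (h n ^ 2) - Norm.norm (2 * u ^ 2 ^ n) ≤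
          Norm.norm (h n ^ 2 - 2 * u ^ 2 ^ n) := by
        have := norm_add_le (h n ^ 2 - 2 * u ^ 2 ^ n) (2 * u ^ 2 ^ n)
        simpa using this
      rw [norm_pow] at hle
      nlinarith
  intro n
  set H := h n with hH
  set v := u ^ 2 ^ n with hv
  have hvabs : Norm.norm v = 1 := by rw [hv, norm_pow, hu1, one_pow]
  have hH3 : 3 ≤ Norm.norm H := habs n
  have hH0 : H ≠ 0 := by
    intro h'
    rw [h'] at hH3; simp at hH3; linarith
  have hH1def : h (n+1) = H^2 - 2*v := hrec n
  have hH1abs : 7 ≤ Norm.norm (h (n+1)) := by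
    have := habs (n+1)
    rw [hH1def]
    have hle : Norm.norm (H ^ 2) - Norm.norm (2 * v) ≤
        Norm.norm (H ^ 2 - 2 * v) := by
      have := norm_add_le (H ^ 2 - 2 * v) (2 * v)
      simpa using this
    rw [norm_pow] at hle
    have h2v : Norm.norm (2 * v) = 2 := by
      rw [norm_mul, hvabs, Complex.norm_two, mul_one]
    nlinarith
  have hH10 : h (n+1) ≠ 0 := by
    intro h'
    rw [h'] at hH1abs; simp at hH1abs; linarith
  have hv2 : u ^ 2 ^ (n+1) = v ^ 2 := by
    rw [hv, ← pow_mul, pow_succ]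
  -- abbreviations
  set A : ℂ := 1 - 4 * v / H ^ 2 with hA
  set B : ℂ := 1 - 4 * v ^ 2 / (h (n+1)) ^ 2 with hB
  set c : ℂ := 1 - 2 * v / H ^ 2 with hc
  -- bounds
  have habsA : Norm.norm (A - 1) ≤ 4/9 := by
    have he : A - 1 = -(4 * v / H ^ 2) := by rw [hA]; ring
    rw [he, norm_neg, norm_div, norm_mul, hvabs, mul_one, norm_pow]
    have h4 : Norm.norm (4:ℂ) = 4 := by norm_num
    rw [h4, div_le_div_iff₀ (by positivity) (by norm_num)]
    nlinarith
  have habsB : Norm.norm (B - 1) ≤ 4/9 := by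
    have he : B - 1 = -(4 * v ^ 2 / (h (n+1)) ^ 2) := by rw [hB]; ring
    have hv2abs : Norm.norm (v ^ 2) = 1 := by rw [norm_pow, hvabs, one_pow]
    rw [he, norm_neg, norm_div, norm_mul, hv2abs, mul_one, norm_pow]
    have h4 : Norm.norm (4:ℂ) = 4 := by norm_num
    rw [h4, div_le_div_iff₀ (by positivity) (by norm_num)]
    nlinarith
  have habsC : Norm.norm (c - 1) ≤ 2/9 := by
    have he : c - 1 = -(2 * v / H ^ 2) := by rw [hc]; ring
    rw [he, norm_neg, norm_div, norm_mul, hvabs, mul_one, norm_pow, Complex.norm_two]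
    rw [div_le_div_iff₀ (by positivity) (by norm_num)]
    nlinarith
  have hReA : 0 < A.re := by
    have h1 : |(A - 1).re| ≤ Norm.norm (A - 1) := Complex.abs_re_le_norm _
    have h2 : (A - 1).re = A.re - 1 := by simp
    rw [h2] at h1
    have := abs_le.mp h1
    linarith [this.1]
  have hReB : 0 < B.re := by
    have h1 : |(B - 1).re| ≤ Norm.norm (B - 1) := Complex.abs_re_le_norm _
    have h2 : (B - 1).re = B.re - 1 := by simp
    rw [h2] at h1
    have := abs_le.mp h1
    linarith [this.1]
  have hReC : 7/9 ≤ c.re := by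
    have h1 : |(c - 1).re| ≤ Norm.norm (c - 1) := Complex.abs_re_le_norm _
    have h2 : (c - 1).re = c.re - 1 := by simp
    rw [h2] at h1
    have := abs_le.mp h1
    linarith [this.1]
  have hImC : |c.im| ≤ 2/9 := by
    have h1 : |(c - 1).im| ≤ Norm.norm (c - 1) := Complex.abs_im_le_norm _
    have h2 : (c - 1).im = c.im := by simp
    rw [h2] at h1
    linarith
  have hA0 : A ≠ 0 := by
    intro h'; rw [h'] at hReA; simp at hReA
  have hB0 : B ≠ 0 := by
    intro h'; rw [h'] at hReB; simp at hReB
  set s1 : ℂ := A ^ ((1:ℂ)/2) with hs1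
  set s2 : ℂ := B ^ ((1:ℂ)/2) with hs2
  have hs1sq : s1 ^ 2 = A := sqrt_sq hA0
  have hs2sq : s2 ^ 2 = B := sqrt_sq hB0
  have hRa : 0 < s1.re := sqrt_re_pos hReA
  have hp : 0 < s2.re := sqrt_re_pos hReB
  -- from Re B > 0 : |Im s2| < Re s2
  have hpq : s2.im * s2.im < s2.re * s2.re := by
    have h2 : (s2 ^ 2).re = s2.re * s2.re - s2.im * s2.im := by
      rw [sq, Complex.mul_re]
    rw [hs2sq] at h2
    linarith
  have hRb : 0 < (s2 * c).re := by
    rw [Complex.mul_re]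
    have hq1 : s2.im < s2.re := by nlinarith
    have hq2 : -s2.re < s2.im := by nlinarith
    have hIc := abs_le.mp hImC
    nlinarith [mul_pos hp (show (0:ℝ) < c.re by linarith)]
  -- algebraic identity
  have hne : H ^ 2 - 2 * v ≠ 0 := hH1def ▸ hH10
  have hkey : A = B * c ^ 2 := by
    rw [hA, hB, hc, hH1def]
    rw [one_sub_div (pow_ne_zero 2 hne), one_sub_div (pow_ne_zero 2 hH0), one_sub_div (pow_ne_zero 2 hH0), div_pow, div_mul_div_comm, eq_div_iff (by simp [hne, hH0]), div_mul_eq_mul_div, div_eq_iff (by simp [hH0])]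
    ring
  -- equality of square roots
  have hab : s1 = s2 * c := by
    have hsq : s1 ^ 2 = (s2 * c) ^ 2 := by
      rw [hs1sq, mul_pow, hs2sq, ← hkey]
    have hfac : (s1 - s2 * c) * (s1 + s2 * c) = 0 := by linear_combination hsq
    rcases mul_eq_zero.mp hfac with h' | h'
    · exact sub_eq_zero.mp h'
    · exfalso
      have hre : s1.re + (s2 * c).re = 0 := by
        have := congrArg Complex.re h'
        simpa using this
      linarith
  have hc2 : H ^ 2 * c = h (n+1) := by
    rw [hc, hH1def]
    field_simp
  calc H ^ 2 * s1 = H ^ 2 * (s2 * c) := by rw [hab]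
    _ = (H ^ 2 * c) * s2 := by ring
    _ = h (n+1) * s2 := by rw [hc2]
    _ = h (n+1) * (1 - 4 * u ^ 2 ^ (n+1) / h (n+1) ^ 2) ^ ((1:ℂ)/2) := by
        rw [hs2, hB, hv2]
end

section
/- Let t, u be complex numbers with |u| = 1 and |t| > 2 such that |h_n| > 2 for all n, where h₀ := t, h_{n+1} := h_n² - 2u^{2^n}. Then the series Σ_{m≥0} u^{2^m}/(h₀ h₁ ⋯ h_m) converges absolutely, and its sum equals (t/2)(1 - √(1 - 4u/t²)), the root α of X² - tX + u of smaller absolute value (with principal square root). -/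
/-- For `t, u ∈ ℂ` with `|u| = 1`, `|t| > 2` and `|h_n| > 2` for all `n`, where `h₀ = t`,
`h_{n+1} = h_n² - 2u^(2^n)`, the series `Σ_m u^(2^m)/(h₀⋯h_m)` converges absolutely and
its sum is the root `α = (t/2)(1 - √(1 - 4u/t²))` of `X² - tX + u` (principal root). -/
theorem stmt_13 (t u : ℂ) (hu : ‖u‖ = 1) (ht : 2 < ‖t‖)
    (h : ℕ → ℂ) (h0 : h 0 = t) (hrec : ∀ n, h (n + 1) = h n ^ 2 - 2 * u ^ 2 ^ n)
    (hbig : ∀ n, 2 < ‖h n‖) :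
    Summable (fun m : ℕ => ‖u ^ 2 ^ m / ∏ k ∈ Finset.range (m + 1), h k‖) ∧
    ∑' m : ℕ, u ^ 2 ^ m / ∏ k ∈ Finset.range (m + 1), h k =
      t / 2 * (1 - (1 - 4 * u / t ^ 2) ^ ((1 : ℂ) / 2)) := by
  have ht0 : t ≠ 0 := by
    intro h; rw [h] at ht; simp at ht; linarith
  set z : ℂ := 1 - 4 * u / t ^ 2 with hz_def
  set s : ℂ := z ^ ((1 : ℂ) / 2) with hs_def
  set α : ℂ := t / 2 * (1 - s) with hα_def
  set β : ℂ := t / 2 * (1 + s) with hβ_def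
  -- z ≠ 0
  have habs4 : ‖4 * u / t ^ 2‖ < 1 := by
    rw [norm_div, norm_mul, norm_pow, hu]
    rw [div_lt_one (by positivity)]
    have : ‖(4:ℂ)‖ = 4 := by norm_num
    rw [this]; nlinarith
  have hz0 : z ≠ 0 := by
    intro hz
    have : (4 : ℂ) * u / t ^ 2 = 1 := by
      have := hz_def ▸ hz; linear_combination -this
    rw [this] at habs4; simp at habs4
  -- s² = z
  have hs2 : s * s = z := by
    rw [hs_def, ← Complex.cpow_add _ _ hz0]
    norm_num
  -- basic root identities
  have hsum : α + β = t := by rw [hα_def, hβ_def]; ring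
  have hprod : α * β = u := by
    have : α * β = t ^ 2 / 4 * (1 - s * s) := by rw [hα_def, hβ_def]; ring
    rw [this, hs2, hz_def]
    field_simp
    ring
  -- Re s ≥ 0
  have hsre : 0 ≤ s.re := by
    rw [hs_def, Complex.cpow_def_of_ne_zero hz0]
    rw [Complex.exp_re]
    apply mul_nonneg (Real.exp_nonneg _)
    have him : (Complex.log z * (1 / 2)).im = z.arg / 2 := by
      simp [Complex.mul_im, Complex.log_im]
      ring
    rw [him]
    apply Real.cos_nonneg_of_mem_Icc
    constructor
    · have := Complex.neg_pi_lt_arg z; linarith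
    · have := Complex.arg_le_pi z; linarith
  -- |α| ≤ |β|
  have hab_le : ‖α‖ ≤ ‖β‖ := by
    rw [hα_def, hβ_def, norm_mul, norm_mul]
    apply mul_le_mul_of_nonneg_left _ (norm_nonneg _)
    have h1 : ‖1 - s‖ ^ 2 ≤ ‖1 + s‖ ^ 2 := by
      rw [Complex.sq_norm, Complex.sq_norm, Complex.normSq_apply, Complex.normSq_apply]
      simp [Complex.add_re, Complex.add_im, Complex.sub_re, Complex.sub_im]
      nlinarith
    nlinarith [norm_nonneg (1 - s), norm_nonneg (1 + s)]
  clear_value β α s z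
  have habprod : ‖α‖ * ‖β‖ = 1 := by
    rw [← norm_mul, hprod, hu]
  have habsum : 2 < ‖α‖ + ‖β‖ := by
    calc 2 < ‖t‖ := ht
    _ = ‖α + β‖ := by rw [hsum]
    _ ≤ _ := norm_add_le _ _
  have hab_ne : ‖α‖ ≠ ‖β‖ := by
    intro hEq
    rw [hEq] at habprod habsum
    nlinarith [norm_nonneg β]
  have hab_lt : ‖α‖ < ‖β‖ := lt_of_le_of_ne hab_le hab_ne
  have haltone : ‖α‖ < 1 := by nlinarith [norm_nonneg α]
  have hbgtone : 1 < ‖β‖ := by nlinarith [norm_nonneg α]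
  have hβ0 : β ≠ 0 := by
    intro hb; rw [hb] at hbgtone; simp at hbgtone; linarith
  have hαβ_ne : α ≠ β := by
    intro hEq; exact hab_ne (by rw [hEq])
  have hαβ0 : α - β ≠ 0 := sub_ne_zero.mpr hαβ_ne
  -- h n = α^(2^n) + β^(2^n)
  have hform : ∀ n, h n = α ^ 2 ^ n + β ^ 2 ^ n := by
    intro n
    induction n with
    | zero => simp [h0, ← hsum]
    | succ n ih =>
      rw [hrec, ih, ← hprod]
      rw [show (2:ℕ) ^ (n + 1) = 2 ^ n * 2 from pow_succ 2 n, pow_mul, pow_mul, mul_pow]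
      ring
  have hne : ∀ n, h n ≠ 0 := fun n => by
    intro hn; have := hbig n; rw [hn] at this; simp at this; linarith
  -- product formula
  have hP : ∀ m, (α - β) * ∏ k ∈ Finset.range (m + 1), h k
      = (α ^ 2 ^ m) ^ 2 - (β ^ 2 ^ m) ^ 2 := by
    intro m
    induction m with
    | zero => simp [hform 0]; ring
    | succ m ih =>
      rw [Finset.prod_range_succ, ← mul_assoc, ih, hform (m + 1)]
      rw [show (2:ℕ) ^ (m + 1) = 2 ^ m * 2 from pow_succ 2 m, pow_mul, pow_mul]
      ring
  -- abs bounds for powers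
  have hpow_lt : ∀ N : ℕ, ‖α ^ 2 ^ N‖ < 1 := by
    intro N
    rw [norm_pow]
    exact pow_lt_one₀ (norm_nonneg _) haltone (Nat.pos_of_ne_zero (pow_ne_zero N two_ne_zero) |>.ne')
  have hpow_gt : ∀ N : ℕ, 1 < ‖β ^ 2 ^ N‖ := by
    intro N
    rw [norm_pow]
    exact one_lt_pow₀ hbgtone (pow_ne_zero N two_ne_zero)
  have hden_ne : ∀ N : ℕ, α ^ 2 ^ N - β ^ 2 ^ N ≠ 0 := by
    intro N hEq
    rw [sub_eq_zero] at hEq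
    have := hpow_lt N; rw [hEq] at this
    exact absurd this (not_lt.mpr (le_of_lt (hpow_gt N)))
  -- the telescoping auxiliary function
  set G : ℕ → ℂ := fun N => (α - β) * β ^ 2 ^ N / (α ^ 2 ^ N - β ^ 2 ^ N) with hG_def
  have hG0 : G 0 = β := by
    simp only [hG_def, pow_zero, pow_one]
    rw [mul_comm (α - β) β, mul_div_assoc, div_self hαβ0, mul_one]
  -- product value
  have hPne : ∀ m : ℕ, (∏ k ∈ Finset.range (m + 1), h k) ≠ 0 :=
    fun m => Finset.prod_ne_zero_iff.mpr fun k _ => hne k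
  have hPval : ∀ m : ℕ, (∏ k ∈ Finset.range (m + 1), h k)
      = ((α ^ 2 ^ m) ^ 2 - (β ^ 2 ^ m) ^ 2) / (α - β) := by
    intro m
    rw [eq_div_iff hαβ0, mul_comm]
    exact hP m
  -- telescoping identity
  have hstep : ∀ m : ℕ, u ^ 2 ^ m / ∏ k ∈ Finset.range (m + 1), h k = G m - G (m + 1) := by
    intro m
    have hxy := hden_ne m
    have hx2 := hden_ne (m + 1)
    have hu2 : u ^ 2 ^ m = α ^ 2 ^ m * β ^ 2 ^ m := by rw [← hprod, mul_pow]
    rw [hu2, hPval m]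
    simp only [hG_def]
    rw [show (2:ℕ) ^ (m + 1) = 2 ^ m * 2 from pow_succ 2 m, pow_mul, pow_mul] at hx2 ⊢
    field_simp
    ring
  -- summability
  have habs_term : ∀ m : ℕ,
      ‖u ^ 2 ^ m / ∏ k ∈ Finset.range (m + 1), h k‖ ≤ (1 / 2) ^ (m + 1) := by
    intro m
    rw [norm_div, norm_pow, hu, one_pow, norm_prod]
    have hle : (2:ℝ) ^ (m + 1) ≤ ∏ k ∈ Finset.range (m + 1), ‖h k‖ := by
      calc (2:ℝ) ^ (m + 1) = ∏ _k ∈ Finset.range (m + 1), (2:ℝ) := by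
            simp [Finset.prod_const, Finset.card_range]
      _ ≤ _ := Finset.prod_le_prod (by intros; norm_num) (fun k _ => (hbig k).le)
    calc (1:ℝ) / ∏ k ∈ Finset.range (m + 1), ‖h k‖
        ≤ 1 / (2:ℝ) ^ (m + 1) := by
          apply one_div_le_one_div_of_le (by positivity) hle
    _ = (1 / 2) ^ (m + 1) := by rw [div_pow, one_pow]
  have hSummAbs : Summable (fun m : ℕ =>
      ‖u ^ 2 ^ m / ∏ k ∈ Finset.range (m + 1), h k‖) := by
    apply Summable.of_nonneg_of_le (fun m => norm_nonneg _)
      (fun m => (habs_term m).trans (pow_le_pow_of_le_one (by norm_num) (by norm_num)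
        (Nat.le_succ m)))
    exact summable_geometric_of_lt_one (by norm_num) (by norm_num)
  have hSumm : Summable (fun m : ℕ => u ^ 2 ^ m / ∏ k ∈ Finset.range (m + 1), h k) := by
    apply Summable.of_norm
    simpa using hSummAbs
  -- limit of G
  have hbpos : 0 < ‖β‖ := by linarith
  have hq : ‖α / β‖ < 1 := by
    rw [norm_div]
    exact (div_lt_one hbpos).mpr hab_lt
  have h1 : Filter.Tendsto (fun N : ℕ => (α / β) ^ 2 ^ N) Filter.atTop (nhds 0) :=
    (tendsto_pow_atTop_nhds_zero_of_norm_lt_one hq).comp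
      (tendsto_pow_atTop_atTop_of_one_lt (α := ℕ) one_lt_two)
  have h2 : Filter.Tendsto (fun N : ℕ => (α - β) / ((α / β) ^ 2 ^ N - 1)) Filter.atTop
      (nhds ((α - β) / (0 - 1))) :=
    Filter.Tendsto.div tendsto_const_nhds (h1.sub tendsto_const_nhds) (by norm_num)
  have hGeq : ∀ N, G N = (α - β) / ((α / β) ^ 2 ^ N - 1) := by
    intro N
    have hb : β ^ 2 ^ N ≠ 0 := pow_ne_zero _ hβ0
    simp only [hG_def]
    rw [div_pow, div_sub_one hb, div_div_eq_mul_div]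
  have hGlim : Filter.Tendsto G Filter.atTop (nhds (β - α)) := by
    have he : (α - β) / ((0:ℂ) - 1) = β - α := by
      rw [zero_sub, div_neg, div_one]; ring
    rw [← he, funext hGeq]
    exact h2
  -- partial sums converge to α
  have hpartialEq : ∀ N : ℕ,
      ∑ m ∈ Finset.range N, (u ^ 2 ^ m / ∏ k ∈ Finset.range (m + 1), h k) = β - G N := by
    intro N
    calc ∑ m ∈ Finset.range N, (u ^ 2 ^ m / ∏ k ∈ Finset.range (m + 1), h k)
        = ∑ m ∈ Finset.range N, (G m - G (m + 1)) :=
          Finset.sum_congr rfl fun m _ => hstep m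
    _ = G 0 - G N := Finset.sum_range_sub' G N
    _ = β - G N := by rw [hG0]
  have hpartial : Filter.Tendsto
      (fun N : ℕ => ∑ m ∈ Finset.range N, (u ^ 2 ^ m / ∏ k ∈ Finset.range (m + 1), h k))
      Filter.atTop (nhds α) := by
    have h3 : Filter.Tendsto (fun N : ℕ => β - G N) Filter.atTop (nhds (β - (β - α))) :=
      tendsto_const_nhds.sub hGlim
    rw [show α = β - (β - α) by ring]
    simpa only [hpartialEq] using h3
  refine ⟨hSummAbs, ?_⟩
  exact tendsto_nhds_unique hSumm.hasSum.tendsto_sum_nat hpartial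
end

section
/- Let u be a complex number with u^4 = 1 and t a Gaussian integer with |Re t| ≥ 3 or |Im t| ≥ 3. Let α = (t/2)(1 - √(1 - 4u/t²)) (principal square root) and let F(z) = (z² - u)/(2z - t) be the Newton map of f(X) = X² - tX + u. Then for all n ≥ 1, |α - F^{(n)}(0)| < 2/ρ^{2^{n+1} - 1}, where ρ = (|t| + √(|t|² - 4))/2 > 1. -/
open Complex

lemma re_cpow_half_nonneg (z : ℂ) : 0 ≤ (z ^ ((1:ℂ)/2)).re := by
  rcases eq_or_ne z 0 with rfl | hz
  · simp [Complex.zero_cpow (by norm_num : (1:ℂ)/2 ≠ 0)]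
  · rw [Complex.cpow_def_of_ne_zero hz, Complex.exp_re]
    have him : (Complex.log z * ((1:ℂ)/2)).im = z.arg / 2 := by
      simp [Complex.mul_im, Complex.log_im]; ring
    rw [him]
    refine mul_nonneg (Real.exp_nonneg _) (Real.cos_nonneg_of_mem_Icc ⟨?_, ?_⟩)
    · linarith [Complex.neg_pi_lt_arg z]
    · linarith [Complex.arg_le_pi z]

lemma cpow_half_sq (z : ℂ) : (z ^ ((1:ℂ)/2)) ^ 2 = z := by
  have := Complex.cpow_nat_inv_pow z (n := 2) (by norm_num)
  simpa [one_div] using this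

set_option maxHeartbeats 1000000 in
/-- For `u⁴ = 1` and a Gaussian integer `t = x + iy` with `|x| ≥ 3` or `|y| ≥ 3`, the Newton
iterates `F^[n] 0` of `F(z) = (z² - u)/(2z - t)` approximate the root
`α = (t/2)(1 - √(1 - 4u/t²))` with `|α - F^[n](0)| < 2/ρ^(2^(n+1)-1)` for `n ≥ 1`,
where `ρ = (|t| + √(|t|²-4))/2 > 1`. -/
theorem stmt_14 (u : ℂ) (hu : u ^ 4 = 1) (t : ℂ) (x y : ℤ)
    (ht : t = (x : ℂ) + (y : ℂ) * Complex.I) (hxy : 3 ≤ |x| ∨ 3 ≤ |y|)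
    (α : ℂ) (hα : α = t / 2 * (1 - (1 - 4 * u / t ^ 2) ^ ((1 : ℂ) / 2)))
    (F : ℂ → ℂ) (hF : ∀ z, F z = (z ^ 2 - u) / (2 * z - t))
    (ρ : ℝ) (hρ : ρ = (‖t‖ + Real.sqrt (‖t‖ ^ 2 - 4)) / 2) :
    1 < ρ ∧ ∀ n : ℕ, 1 ≤ n →
      ‖α - F^[n] 0‖ < 2 / ρ ^ (2 ^ (n + 1) - 1) := by
  set T := ‖t‖ with hT
  have hT3 : (3:ℝ) ≤ T := by
    have hre : t.re = (x:ℝ) := by rw [ht]; simp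
    have him : t.im = (y:ℝ) := by rw [ht]; simp
    rcases hxy with h | h
    · have h1 : (3:ℝ) ≤ |(x:ℝ)| := by exact_mod_cast (by exact_mod_cast h : (3:ℤ) ≤ |x|)
      calc (3:ℝ) ≤ |(x:ℝ)| := h1
        _ = |t.re| := by rw [hre]
        _ ≤ T := Complex.abs_re_le_norm t
    · have h1 : (3:ℝ) ≤ |(y:ℝ)| := by exact_mod_cast (by exact_mod_cast h : (3:ℤ) ≤ |y|)
      calc (3:ℝ) ≤ |(y:ℝ)| := h1
        _ = |t.im| := by rw [him]
        _ ≤ T := Complex.abs_im_le_norm t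
  have hT0 : (0:ℝ) < T := by linarith
  have ht0 : t ≠ 0 := by
    intro h; rw [h] at hT; simp [hT] at hT3; linarith
  have ht2 : t ^ 2 ≠ 0 := pow_ne_zero _ ht0
  set r := Real.sqrt (T ^ 2 - 4) with hr
  have hr0 : 0 ≤ r := Real.sqrt_nonneg _
  have hr2 : r ^ 2 = T ^ 2 - 4 := Real.sq_sqrt (by nlinarith)
  have hr115 : (11/5 : ℝ) ≤ r := by nlinarith
  have hsum : T + r = 2 * ρ := by rw [hρ]; ring
  have hρ52 : (5/2 : ℝ) ≤ ρ := by nlinarith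
  have hρ0 : (0:ℝ) < ρ := by linarith
  have hρ1 : (1:ℝ) < ρ := by linarith
  refine ⟨hρ1, ?_⟩
  have hu1 : ‖u‖ = 1 := by
    have h4 : ‖u‖ ^ 4 = 1 := by rw [← norm_pow, hu, norm_one]
    nlinarith [norm_nonneg u, sq_nonneg (‖u‖ - 1),
      sq_nonneg (‖u‖ + 1), sq_nonneg (‖u‖ ^ 2 - 1)]
  have hu0 : u ≠ 0 := by intro h; rw [h] at hu1; simp at hu1
  set s := (1 - 4 * u / t ^ 2) ^ ((1 : ℂ) / 2) with hs
  have hsre : 0 ≤ s.re := re_cpow_half_nonneg _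
  have hs2' : t ^ 2 * s ^ 2 = t ^ 2 - 4 * u := by
    rw [hs, cpow_half_sq]; field_simp
  have hroot : α ^ 2 - t * α + u = 0 := by
    rw [hα]; linear_combination (1/4) * hs2'
  set β := t - α with hβ
  have hprod : α * β = u := by rw [hβ]; linear_combination -hroot
  have hα0 : α ≠ 0 := by
    intro h; rw [h, zero_mul] at hprod; exact hu0 hprod.symm
  have hβ0 : β ≠ 0 := by
    intro h; rw [h, mul_zero] at hprod; exact hu0 hprod.symm
  set a := ‖α‖ with ha
  set b := ‖β‖ with hb
  have ha0 : 0 < a := norm_pos_iff.mpr hα0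
  have hb0 : 0 < b := norm_pos_iff.mpr hβ0
  have habs : a * b = 1 := by rw [ha, hb, ← norm_mul, hprod, hu1]
  have hab : a ≤ b := by
    have hαs : α = t/2 * (1 - s) := hα
    have hβs : β = t/2 * (1 + s) := by rw [hβ, hα]; ring
    have h1s : ‖1 - s‖ ≤ ‖1 + s‖ := by
      have h1 : ‖1-s‖^2 ≤ ‖1+s‖^2 := by
        rw [Complex.sq_norm, Complex.sq_norm, Complex.normSq_apply, Complex.normSq_apply]
        simp only [Complex.add_re, Complex.add_im, Complex.sub_re, Complex.sub_im,
          Complex.one_re, Complex.one_im]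
        nlinarith
      nlinarith [norm_nonneg (1-s), norm_nonneg (1+s)]
    rw [ha, hb, hαs, hβs, norm_mul, norm_mul]
    exact mul_le_mul_of_nonneg_left h1s (norm_nonneg _)
  have ha1 : a ≤ 1 := by
    by_contra hcon
    push_neg at hcon
    have h1 : a * a ≤ a * b := mul_le_mul_of_nonneg_left hab (by linarith)
    nlinarith [h1, habs]
  have hquad_a : T * a - 1 ≤ a ^ 2 := by
    have hsq : α ^ 2 = t * α - u := by linear_combination hroot
    have h1 : a ^ 2 = ‖t * α - u‖ := by rw [ha, ← norm_pow, hsq]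
    have h2 : ‖t * α‖ - ‖u‖ ≤ ‖t * α - u‖ := by
      have := norm_sub_norm_le (t * α) u
      simpa using this
    rw [norm_mul, hu1, ← hT, ← ha] at h2
    linarith
  have hquad_ρ : ρ ^ 2 - T * ρ + 1 = 0 := by
    have h : ρ = (T + r)/2 := by linarith
    rw [h]; linear_combination (1/4) * hr2
  have haρ : a * ρ ≤ 1 := by
    have hpr : (ρ - a) * (1 - a*ρ) = (a^2 - T*a + 1) * ρ := by
      linear_combination (-a) * hquad_ρ
    have h0 : 0 ≤ (ρ - a) * (1 - a*ρ) := by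
      rw [hpr]; exact mul_nonneg (by linarith) hρ0.le
    have hpos : 0 < ρ - a := by linarith
    have := (mul_nonneg_iff_of_pos_left hpos).mp h0
    linarith
  have hainv : a ≤ 1 / ρ := by
    rw [le_div_iff₀ hρ0]; linarith
  set w := α / β with hw
  have hwa : ‖w‖ = a ^ 2 := by
    rw [hw, norm_div, ← ha, ← hb, div_eq_iff hb0.ne']
    have h : a ^ 2 * b = a * (a * b) := by ring
    rw [h, habs, mul_one]
  have ha25 : a ≤ 2/5 := by
    have h25 : a * (5/2) ≤ a * ρ := mul_le_mul_of_nonneg_left hρ52 ha0.le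
    linarith
  have hwlt1 : ‖w‖ < 1 := by
    rw [hwa]
    have h1 : a * a ≤ (2/5) * (2/5) := mul_le_mul ha25 ha25 ha0.le (by norm_num)
    calc a^2 = a * a := sq a
      _ ≤ (2/5) * (2/5) := h1
      _ < 1 := by norm_num
  have hab' : a < b := by
    have hb' : 1 ≤ (2/5) * b := by
      calc (1:ℝ) = a * b := habs.symm
        _ ≤ (2/5) * b := mul_le_mul_of_nonneg_right ha25 hb0.le
    linarith
  have hαβ : α ≠ β := by
    intro h
    apply hab'.ne
    rw [ha, hb, h]
  have habsm : ∀ n : ℕ, ‖w ^ (2^n)‖ < 1 := by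
    intro n
    rw [norm_pow]
    calc ‖w‖ ^ 2^n ≤ ‖w‖ ^ 1 :=
          pow_le_pow_of_le_one (norm_nonneg w) hwlt1.le Nat.one_le_two_pow
      _ < 1 := by simpa using hwlt1
  have h1m : ∀ n : ℕ, (1:ℂ) - w ^ (2^n) ≠ 0 := by
    intro n h
    have h2 := habsm n
    rw [show w^(2^n) = 1 by linear_combination -h] at h2
    simp at h2
  have key : ∀ m : ℂ, ‖m‖ < 1 →
      F ((α - β*m)/(1-m)) = (α - β*m^2)/(1-m^2) := by
    intro m hm
    have h1 : (1:ℂ) - m ≠ 0 := by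
      intro h
      rw [show m = 1 by linear_combination -h] at hm; simp at hm
    have h2 : (1:ℂ) + m ≠ 0 := by
      intro h
      rw [show m = -1 by linear_combination h] at hm; simp at hm
    have hts : t = α + β := by rw [hβ]; ring
    have hd : α - β ≠ 0 := sub_ne_zero.mpr hαβ
    have hden : 2*((α - β*m)/(1-m)) - t = (α-β)*(1+m)/(1-m) := by
      rw [hts]; field_simp; ring
    have h1m2 : (1:ℂ) - m^2 ≠ 0 := by
      have h : (1:ℂ) - m^2 = (1-m)*(1+m) := by ring
      rw [h]; exact mul_ne_zero h1 h2
    rw [hF, hden, ← hprod]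
    rw [div_eq_div_iff (div_ne_zero (mul_ne_zero hd h2) h1) h1m2]
    field_simp
    ring
  have hiter : ∀ n : ℕ, F^[n] 0 = (α - β * w^(2^n))/(1 - w^(2^n)) := by
    intro n
    induction n with
    | zero =>
      simp only [Function.iterate_zero, id_eq, pow_zero, pow_one]
      have hβw : β * w = α := by rw [hw]; field_simp
      rw [hβw, sub_self, zero_div]
    | succ n ih =>
      rw [Function.iterate_succ_apply', ih, key _ (habsm n), ← pow_mul, ← pow_succ]
  intro n hn
  have hdiff : α - F^[n] 0 = (β - α) * w^(2^n) / (1 - w^(2^n)) := by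
    rw [hiter n]
    field_simp [h1m n]
    ring
  set k := 2^(n+1) with hk
  have hk4 : 4 ≤ k := by
    rw [hk]
    calc (4:ℕ) = 2^2 := by norm_num
      _ ≤ 2^(n+1) := Nat.pow_le_pow_right (by norm_num) (by omega)
  have hM : ‖w ^ (2^n)‖ = a ^ k := by
    rw [norm_pow, hwa, ← pow_mul, hk]
    congr 1
    rw [pow_succ]; ring
  have hba : β - α = t * s := by rw [hβ, hα]; ring
  have habsdiff : ‖β - α‖ ≤ T + 1 := by
    have e3 : ‖t^2 - 4*u‖ ≤ T^2 + 4 := by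
      have hn1 := norm_sub_le (t^2) (4*u)
      have h4u : ‖4*u‖ = 4 := by
        rw [norm_mul, hu1]; norm_num
      have ht2a : ‖t^2‖ = T^2 := by rw [norm_pow, ← hT]
      rw [h4u, ht2a] at hn1
      linarith
    have hs2abs : T^2 * ‖s‖ ^ 2 ≤ T^2 + 4 := by
      calc T^2 * ‖s‖ ^ 2 = ‖t^2 * s^2‖ := by
            rw [norm_mul, norm_pow, norm_pow, ← hT]
        _ = ‖t^2 - 4*u‖ := by rw [hs2']
        _ ≤ T^2 + 4 := e3
    have h1 : ‖β - α‖ = T * ‖s‖ := by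
      rw [hba, norm_mul, ← hT]
    nlinarith [norm_nonneg s, norm_nonneg (β - α)]
  set D := ‖1 - w^(2^n)‖ with hD
  have hak1 : a ^ k < 1 := by
    calc a ^ k ≤ a ^ 1 := pow_le_pow_of_le_one ha0.le ha1 (le_trans (by norm_num) hk4)
      _ = a := pow_one a
      _ < 1 := by linarith
  have hDge : 1 - a ^ k ≤ D := by
    have h := norm_sub_norm_le (1:ℂ) (w^(2^n))
    simp only [norm_one] at h
    rw [hM] at h
    exact h
  have hD0 : 0 < D := by linarith
  rw [hdiff, norm_div, norm_mul, hM, ← hD]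
  rw [div_lt_div_iff₀ hD0 (pow_pos hρ0 _)]
  have hak4 : a ^ k ≤ a ^ 4 := pow_le_pow_of_le_one ha0.le ha1 hk4
  have ha4 : a ^ 4 ≤ (1/ρ)^4 := pow_le_pow_left₀ ha0.le hainv 4
  have hDge' : 1 - (1/ρ)^4 ≤ D := by linarith
  have hkk : k - 1 + 1 = k := Nat.succ_pred_eq_of_pos (lt_of_lt_of_le (by norm_num) hk4)
  have hsplit : a ^ k * ρ ^ (k-1) = a * (a*ρ)^(k-1) := by
    obtain ⟨j, hj⟩ : ∃ j, k = j + 1 := ⟨k - 1, hkk.symm⟩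
    rw [hj, Nat.add_sub_cancel, pow_succ, mul_pow]
    ring
  have haρpow : (a*ρ)^(k-1) ≤ 1 := pow_le_one₀ (mul_nonneg ha0.le hρ0.le) haρ
  have hLHS : ‖β - α‖ * a ^ k * ρ ^ (k-1) ≤ (T+1) * a := by
    calc ‖β - α‖ * a ^ k * ρ ^ (k-1)
        ≤ (T+1) * (a ^ k * ρ ^ (k-1)) := by
          rw [mul_assoc]
          exact mul_le_mul_of_nonneg_right habsdiff
            (mul_nonneg (pow_nonneg ha0.le _) (pow_nonneg hρ0.le _))
      _ = (T+1) * (a * (a*ρ)^(k-1)) := by rw [hsplit]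
      _ ≤ (T+1) * (a * 1) := by
          apply mul_le_mul_of_nonneg_left _ (by linarith)
          exact mul_le_mul_of_nonneg_left haρpow ha0.le
      _ = (T+1) * a := by ring
  have hfinal : (T+1) * a < 2 * (1 - (1/ρ)^4) := by
    have hρ3 : (5/2:ℝ)^3 ≤ ρ^3 := pow_le_pow_left₀ (by norm_num) hρ52 3
    have hkey : (T+1) * ρ^3 + 2 < 2 * ρ^4 := by
      nlinarith [mul_nonneg (show (0:ℝ) ≤ r - 11/5 by linarith)
        (show (0:ℝ) ≤ ρ^3 by positivity)]
    have haa : (T+1) * a * ρ^4 ≤ (T+1) * ρ^3 := by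
      have h1 : (T+1) * a * ρ^4 = ((T+1) * ρ^3) * (a*ρ) := by ring
      rw [h1]
      exact mul_le_of_le_one_right (by positivity) haρ
    have hρ4pos : (0:ℝ) < ρ^4 := by positivity
    rw [← mul_lt_mul_iff_left₀ hρ4pos]
    have h2D : 2 * (1 - (1/ρ)^4) * ρ^4 = 2*ρ^4 - 2 := by field_simp
    rw [h2D]
    linarith
  calc ‖β - α‖ * a ^ k * ρ ^ (k-1) ≤ (T+1) * a := hLHS
    _ < 2 * (1 - (1/ρ)^4) := hfinal
    _ ≤ 2 * D := by linarith
end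

section
/- Let u be a complex number with u^4 = 1 and t a Gaussian integer with |Re t| ≥ 3 or |Im t| ≥ 3. Let β = (t/2)(1 + √(1 - 4u/t²)) and F(z) = (z² - u)/(2z - t). Then for all n ≥ 1, |β - F^{(n)}(t)| < 2/ρ^{2^{n+1} - 1}, where ρ = (|t| + √(|t|² - 4))/2 > 1. Moreover F^{(n)}(t) = t - F^{(n)}(0) for all n ≥ 1. -/
theorem stmt_15_aux_est (a b ρ D r : ℝ) (m : ℕ) (hm : 1 ≤ m)
    (ha0 : 0 ≤ a) (hab : a * b = 1) (hb : 3/2 ≤ b) (hρ32 : 3/2 ≤ ρ) (hρb : ρ ≤ b)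
    (hr0 : 0 ≤ r) (hD : b ^ (2 ^ (m + 1)) - 1 ≤ D)
    (hr : r * D ≤ a + b) :
    r < 2 / ρ ^ (2 ^ (m + 1) - 1) := by
  have hm4 : 4 ≤ 2 ^ (m + 1) := by
    calc 4 = 2 ^ 2 := by norm_num
      _ ≤ 2 ^ (m + 1) := Nat.pow_le_pow_right (by norm_num) (by omega)
  set P : ℝ := b ^ (2 ^ (m + 1) - 2) with hP
  have hP94 : 9/4 ≤ P := by
    rw [hP]
    calc (9:ℝ)/4 = (3/2) ^ 2 := by norm_num
      _ ≤ b ^ 2 := by nlinarith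
      _ ≤ b ^ (2 ^ (m + 1) - 2) := pow_le_pow_right₀ (by linarith) (by omega)
  have hbm : b ^ (2 ^ (m + 1)) = P * b ^ 2 := by
    rw [hP, ← pow_add]
    congr 1
    omega
  have hbm1 : b ^ (2 ^ (m + 1) - 1) = P * b := by
    rw [hP, ← pow_succ]
    congr 1
    omega
  have hQ : ρ ^ (2 ^ (m + 1) - 1) ≤ P * b := by
    rw [← hbm1]
    exact pow_le_pow_left₀ (by linarith) hρb _
  have hQ0 : 0 < ρ ^ (2 ^ (m + 1) - 1) := pow_pos (by linarith) _
  rw [hbm] at hD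
  set Q : ℝ := ρ ^ (2 ^ (m + 1) - 1) with hQdef
  clear_value P Q
  clear hbm hbm1 hP hQdef hm4 hm
  -- now pure arithmetic
  have hPb : 0 < P * b ^ 2 - 1 := by nlinarith
  have h1 : r * (P * b ^ 2 - 1) ≤ a + b := by nlinarith [mul_le_mul_of_nonneg_left hD hr0]
  have haP : a * b * P = P := by rw [hab, one_mul]
  have h2 : (a + b) * (P * b) < 2 * (P * b ^ 2 - 1) := by
    nlinarith [haP, mul_le_mul_of_nonneg_left (show (5:ℝ)/4 ≤ b ^ 2 - 1 by nlinarith)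
      (show (0:ℝ) ≤ P by linarith)]
  rw [lt_div_iff₀ hQ0]
  nlinarith [h1, h2, hPb, mul_le_mul_of_nonneg_left hQ hr0,
    mul_le_mul_of_nonneg_right h1 (show (0:ℝ) ≤ P * b by nlinarith)]


/-- For `u⁴ = 1` and a Gaussian integer `t = x + iy` with `|x| ≥ 3` or `|y| ≥ 3`, the Newton
iterates `F^[n] t` of `F(z) = (z² - u)/(2z - t)` approximate the root
`β = (t/2)(1 + √(1 - 4u/t²))` with `|β - F^[n](t)| < 2/ρ^(2^(n+1)-1)` for `n ≥ 1`, where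
`ρ = (|t| + √(|t|²-4))/2 > 1`; moreover `F^[n](t) = t - F^[n](0)` for all `n ≥ 1`. -/
theorem stmt_15 (u : ℂ) (hu : u ^ 4 = 1) (t : ℂ) (x y : ℤ)
    (ht : t = (x : ℂ) + (y : ℂ) * Complex.I) (hxy : 3 ≤ |x| ∨ 3 ≤ |y|)
    (β : ℂ) (hβ : β = t / 2 * (1 + (1 - 4 * u / t ^ 2) ^ ((1 : ℂ) / 2)))
    (F : ℂ → ℂ) (hF : ∀ z, F z = (z ^ 2 - u) / (2 * z - t))
    (ρ : ℝ) (hρ : ρ = (‖t‖ + Real.sqrt (‖t‖ ^ 2 - 4)) / 2) :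
    1 < ρ ∧ (∀ n : ℕ, 1 ≤ n →
      ‖β - F^[n] t‖ < 2 / ρ ^ (2 ^ (n + 1) - 1)) ∧
    ∀ n : ℕ, 1 ≤ n → F^[n] t = t - F^[n] 0 := by
  -- |u| = 1
  have habsu : ‖u‖ = 1 := by
    have h4 : ‖u‖ ^ 4 = 1 := by rw [← norm_pow, hu, norm_one]
    nlinarith [norm_nonneg u, sq_nonneg (‖u‖ ^ 2 - 1),
      sq_nonneg (‖u‖ - 1), sq_nonneg (‖u‖ + 1)]
  -- |t| ≥ 3
  have habst : 3 ≤ ‖t‖ := by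
    rcases hxy with h | h
    · have hre : t.re = (x : ℝ) := by simp [ht]
      have h1 := Complex.abs_re_le_norm t
      rw [hre] at h1
      have hx : (3 : ℝ) ≤ |(x : ℝ)| := by
        rw [← Int.cast_abs]; exact_mod_cast h
      linarith
    · have him : t.im = (y : ℝ) := by simp [ht]
      have h1 := Complex.abs_im_le_norm t
      rw [him] at h1
      have hy : (3 : ℝ) ≤ |(y : ℝ)| := by
        rw [← Int.cast_abs]; exact_mod_cast h
      linarith
  have ht0 : t ≠ 0 := by
    intro h; rw [h, norm_zero] at habst; linarith
  -- z₀ := 1 - 4u/t² ≠ 0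
  have hz0 : (1 : ℂ) - 4 * u / t ^ 2 ≠ 0 := by
    intro h
    have ht2 : t ^ 2 = 4 * u := by
      field_simp at h
      linear_combination h
    have : ‖t‖ ^ 2 = 4 := by
      rw [← norm_pow, ht2, norm_mul, habsu]
      simp
    nlinarith
  set s : ℂ := (1 - 4 * u / t ^ 2) ^ ((1 : ℂ) / 2) with hs
  have hs2 : s ^ 2 = 1 - 4 * u / t ^ 2 := by
    rw [hs, sq, ← Complex.cpow_add _ _ hz0]
    norm_num
  have hsre : 0 ≤ s.re := by
    rw [hs, Complex.cpow_def_of_ne_zero hz0, Complex.exp_re]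
    have him : (Complex.log (1 - 4 * u / t ^ 2) * ((1:ℂ)/2)).im
        = (Complex.log (1 - 4 * u / t ^ 2)).im / 2 := by
      simp [Complex.mul_im]
      ring
    rw [him]
    have harg := Complex.log_im (1 - 4 * u / t ^ 2)
    have h1 := Complex.neg_pi_lt_arg (1 - 4 * u / t ^ 2)
    have h2 := Complex.arg_le_pi (1 - 4 * u / t ^ 2)
    have hcos : 0 ≤ Real.cos ((Complex.log (1 - 4 * u / t ^ 2)).im / 2) := by
      apply Real.cos_nonneg_of_mem_Icc
      constructor <;> rw [harg] <;> [linarith; linarith]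
    positivity
  -- root equation
  have hroot : β ^ 2 - t * β + u = 0 := by
    have hs2' : t ^ 2 * s ^ 2 = t ^ 2 - 4 * u := by
      rw [hs2]; field_simp
    rw [hβ]
    linear_combination (1/4 : ℂ) * hs2'
  set α : ℂ := t - β with hα
  have hmul : α * β = u := by rw [hα]; linear_combination -hroot
  set a : ℝ := ‖α‖ with haa
  set b : ℝ := ‖β‖ with hbb
  have ha0 : 0 ≤ a := norm_nonneg α
  have hab : a * b = 1 := by rw [haa, hbb, ← norm_mul, hmul, habsu]
  -- b ≥ 3/2
  have hb32 : 3/2 ≤ b := by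
    have h1s : 1 ≤ ‖1 + s‖ := by
      have h := Complex.sq_norm (1 + s)
      rw [Complex.normSq_apply] at h
      simp only [Complex.add_re, Complex.add_im, Complex.one_re, Complex.one_im, zero_add] at h
      nlinarith [norm_nonneg (1 + s), sq_nonneg s.im, sq_nonneg s.re, hsre]
    have : ‖β‖ = ‖t‖ / 2 * ‖1 + s‖ := by
      rw [hβ, norm_mul, norm_div, Complex.norm_two]
    rw [hbb, this]
    nlinarith
  have ha23 : a ≤ 2/3 := by nlinarith
  have hane : α ≠ 0 := by
    intro h
    rw [h, zero_mul] at hmul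
    rw [← hmul, norm_zero] at habsu
    linarith
  have habne : α ≠ β := by
    intro h
    rw [haa, h, ← hbb] at ha23
    linarith
  have hbane : β - α ≠ 0 := sub_ne_zero.mpr (Ne.symm habne)
  -- ρ facts
  have hT2 : 0 ≤ ‖t‖ ^ 2 - 4 := by nlinarith
  have hρ32 : 3/2 ≤ ρ := by
    rw [hρ]
    have := Real.sqrt_nonneg (‖t‖ ^ 2 - 4)
    linarith
  have hρ1 : 1 < ρ := by linarith
  have hρquad : ρ ^ 2 - ‖t‖ * ρ + 1 = 0 := by
    rw [hρ]
    have h := Real.sq_sqrt hT2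
    linear_combination (1/4 : ℝ) * h
  have hsum : ‖t‖ ≤ a + b := by
    have : α + β = t := by rw [hα]; ring
    calc ‖t‖ = ‖α + β‖ := by rw [this]
      _ ≤ a + b := norm_add_le α β
  have hρb : ρ ≤ b := by
    by_contra hc
    push_neg at hc
    nlinarith [mul_pos (show (0:ℝ) < ρ - a by linarith) (show (0:ℝ) < ρ - b by linarith)]
  -- the conjugating sequence
  set w : ℕ → ℂ := fun n => (β / α) ^ (2 ^ n) with hw
  have hba2 : b / a = b ^ 2 := by
    rw [div_eq_iff (show a ≠ 0 by intro h; rw [h, zero_mul] at hab; linarith)]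
    linear_combination (-b) * hab
  have hwabs : ∀ n, ‖w n‖ = b ^ (2 ^ (n + 1)) := by
    intro n
    simp only [hw, norm_pow, norm_div, ← haa, ← hbb]
    rw [hba2, ← pow_mul, pow_succ, mul_comm]
  have hW1 : ∀ n, 1 < ‖w n‖ := by
    intro n
    rw [hwabs n]
    exact one_lt_pow₀ (by linarith) (by positivity)
  have h1w : ∀ n, (1 : ℂ) - w n ≠ 0 := by
    intro n h
    have h1 : w n = 1 := by linear_combination -h
    have h2 := hW1 n
    rw [h1, norm_one] at h2
    exact lt_irrefl 1 h2
  have h1w' : ∀ n, (1 : ℂ) + w n ≠ 0 := by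
    intro n h
    have h1 : w n = -1 := by linear_combination h
    have h2 := hW1 n
    rw [h1] at h2
    simp at h2
  -- one Newton step in conjugated coordinates
  have step : ∀ z W : ℂ, z * (1 - W) = α - β * W → (1 : ℂ) - W ≠ 0 → (1 : ℂ) + W ≠ 0 →
      F z * (1 - W ^ 2) = α - β * W ^ 2 := by
    intro z W hzW hW1 hW2
    have hdne : 2 * z - t ≠ 0 := by
      intro h0
      have h1 : (β - α) * (1 + W) = 0 := by
        linear_combination (W - 1) * h0 + 2 * hzW + (1 - W) * hα
      rcases mul_eq_zero.1 h1 with h2 | h2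
      · exact hbane h2
      · exact hW2 h2
    have key2 : (z ^ 2 - u) * (1 - W ^ 2) * (1 - W) ^ 2
        = (α - β * W ^ 2) * (2 * z - t) * (1 - W) ^ 2 := by
      linear_combination ((1 - W) ^ 2 * (1 - W ^ 2)) * hmul
        - ((α - β * W ^ 2) * (1 - W) ^ 2) * hα
        + ((1 - W ^ 2) * (z * (1 - W) + (α - β * W)) - 2 * (α - β * W ^ 2) * (1 - W)) * hzW
    rw [hF, div_mul_eq_mul_div, div_eq_iff hdne]
    exact mul_right_cancel₀ (pow_ne_zero 2 hW1) key2
  have hww : ∀ n, w (n + 1) = (w n) ^ 2 := by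
    intro n
    simp only [hw]
    rw [pow_succ, pow_mul]
  have key : ∀ n, F^[n] t * (1 - w n) = α - β * w n := by
    intro n
    induction n with
    | zero =>
      have hw0 : w 0 = β / α := by simp [hw]
      simp only [Function.iterate_zero_apply, hw0]
      field_simp
      linear_combination (β - α) * hα
    | succ n ih =>
      rw [Function.iterate_succ_apply', hww n]
      exact step (F^[n] t) (w n) ih (h1w n) (h1w' n)
  have hdist : ∀ n, β - F^[n] t = (β - α) / (1 - w n) := by
    intro n
    rw [eq_div_iff (h1w n)]
    linear_combination -key n
  refine ⟨hρ1, ?_, ?_⟩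
  · -- main estimate
    intro n hn
    have hD : b ^ (2 ^ (n + 1)) - 1 ≤ ‖1 - w n‖ := by
      calc b ^ (2 ^ (n + 1)) - 1 = ‖w n‖ - ‖(1 : ℂ)‖ := by
            rw [hwabs n, norm_one]
        _ ≤ ‖w n - 1‖ := norm_sub_norm_le _ _
        _ = ‖1 - w n‖ := by rw [norm_sub_rev]
    have hr : ‖β - F^[n] t‖ * ‖1 - w n‖ ≤ a + b := by
      rw [← norm_mul]
      have he : (β - F^[n] t) * (1 - w n) = β - α := by linear_combination -key n
      rw [he]
      calc ‖β - α‖ ≤ ‖β‖ + ‖α‖ := by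
            simpa [sub_eq_add_neg] using norm_add_le β (-α)
        _ = a + b := by rw [← haa, ← hbb]; ring
    exact stmt_15_aux_est a b ρ _ _ n hn ha0 hab hb32 hρ32 hρb
      (norm_nonneg _) hD hr
  · -- symmetry
    intro n hn1
    clear hn1
    induction n with
    | zero => simp
    | succ n ih =>
      have hzt : F^[n] t ≠ t / 2 := by
        intro h
        have h1 : (β - α) * (1 + w n) = 0 := by
          have k := key n
          rw [h] at k
          linear_combination 2 * k + (1 - w n) * hα
        rcases mul_eq_zero.1 h1 with h2 | h2
        · exact hbane h2
        · exact h1w' n (by linear_combination h2)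
      have h0 : F^[n] 0 = t - F^[n] t := by rw [ih]; ring
      have h2 : 2 * F^[n] t - t ≠ 0 := by
        intro h
        exact hzt (by linear_combination h / 2)
      rw [Function.iterate_succ_apply', Function.iterate_succ_apply', h0, hF, hF]
      have h2' : 2 * (t - F^[n] t) - t = -(2 * F^[n] t - t) := by ring
      rw [h2', div_neg]
      have h2'' : F^[n] t * 2 - t ≠ 0 := by rwa [mul_comm]
      field_simp
      ring
end

section
/- Let t be a Gaussian integer with |Re t| ≥ 3 or |Im t| ≥ 3, and u a complex number with u^4 = 1. Then the polynomial X² - tX + u is irreducible over the field Q(i). -/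
open Polynomial

lemma aux_unit_re_im {z : GaussianInt} (hz : IsUnit z) : |z.re| ≤ 1 ∧ |z.im| ≤ 1 := by
  have hn : z.norm = 1 := (Zsqrtd.norm_eq_one_iff' (by norm_num) z).mpr hz
  have h1 : z.re * z.re + z.im * z.im = 1 := by
    have := hn
    simp [Zsqrtd.norm] at this
    linarith
  constructor <;> nlinarith [sq_abs z.re, sq_abs z.im, abs_nonneg z.re, abs_nonneg z.im]

/-- For a Gaussian integer `t` with `|Re t| ≥ 3` or `|Im t| ≥ 3` and a unit `u` with
`u⁴ = 1`, the polynomial `X² - tX + u` is irreducible over `ℚ(i)` (realized as the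
fraction field of `ℤ[i]`). -/
theorem stmt_16 (t : GaussianInt) (ht : 3 ≤ |t.re| ∨ 3 ≤ |t.im|)
    (u : GaussianInt) (hu : u ^ 4 = 1) :
    Irreducible (X ^ 2 - C (algebraMap GaussianInt (FractionRing GaussianInt) t) * X +
      C (algebraMap GaussianInt (FractionRing GaussianInt) u)) := by
  set K := FractionRing GaussianInt
  set f := algebraMap GaussianInt K with hf
  set p : K[X] := X ^ 2 - C (f t) * X + C (f u) with hp
  have hpeq : p = C 1 * X ^ 2 + C (-(f t)) * X + C (f u) := by
    simp only [map_one, one_mul, map_neg, C_neg]; unfold p; ring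
  have hdeg : p.natDegree = 2 := by
    rw [hpeq]; exact natDegree_quadratic one_ne_zero
  rw [irreducible_iff_roots_eq_zero_of_degree_le_three (by omega) (by omega)]
  rw [Multiset.eq_zero_iff_forall_notMem]
  intro a ha
  have hp0 : p ≠ 0 := fun h => by simp [h] at hdeg
  rw [mem_roots hp0, IsRoot] at ha
  have heval : a ^ 2 - f t * a + f u = 0 := by
    simpa [hp] using ha
  -- a is integral over ℤ[i], hence of the form f z
  have hint : IsIntegral GaussianInt a := by
    refine ⟨X ^ 2 - C t * X + C u, ?_, ?_⟩
    · have h1 : (X ^ 2 - C t * X + C u : GaussianInt[X]) =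
          C 1 * X ^ 2 + C (-t) * X + C u := by simp only [map_one, one_mul, map_neg, C_neg]; ring
      have : (X ^ 2 - C t * X + C u : GaussianInt[X]).natDegree = 2 := by
        rw [h1]; exact natDegree_quadratic one_ne_zero
      rw [Monic, Polynomial.leadingCoeff, this]
      simp
    · simp [aeval_def, eval₂_sub, eval₂_add, ← hf]
      simpa [← hf] using heval
  obtain ⟨z, rfl⟩ := IsIntegrallyClosed.isIntegral_iff.mp hint
  have hinj : Function.Injective f := IsFractionRing.injective _ _
  have hz : z ^ 2 - t * z + u = 0 := by
    apply hinj
    push_cast [map_add, map_sub, map_mul, map_pow, map_zero]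
    simpa using heval
  -- z divides u, u is a unit, so z and t - z are units
  have huu : IsUnit u := IsUnit.of_mul_eq_one (a := u) (u ^ 3) (by rw [← pow_succ']; exact hu)
  have hmul : z * (t - z) = u := by ring_nf; ring_nf at hz; linear_combination -hz
  have hzu : IsUnit z := isUnit_of_mul_isUnit_left (hmul ▸ huu)
  have hwu : IsUnit (t - z) := isUnit_of_mul_isUnit_right (hmul ▸ huu)
  obtain ⟨h1, h2⟩ := aux_unit_re_im hzu
  obtain ⟨h3, h4⟩ := aux_unit_re_im hwu
  have hre : t.re = z.re + (t - z).re := by simp [Zsqrtd.re_sub]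
  have him : t.im = z.im + (t - z).im := by simp [Zsqrtd.im_sub]
  rcases ht with h | h
  · have := abs_add_le z.re (t - z).re
    rw [← hre] at this; omega
  · have := abs_add_le z.im (t - z).im
    rw [← him] at this; omega
end

section
/- For the continued fraction with partial denominators b₀ = T, b_n = -U^{-1}T (n odd ≥ 1), b_n = T (n even ≥ 2), with continuants r_n, s_n, the identity r_{2^n - 1}/s_{2^n - 1} - T = s_{2^n - 2}/s_{2^n - 1} holds in Q(T,U) for all n ≥ 1. -/
/-!
Since `R` and `Sd` satisfy the same recurrence, so does `R k - T * Sd k`, and a two-step induction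
gives `r_{2m-1} - T s_{2m-1} = s_{2m-2}` and `r_{2m} - T s_{2m} = -U s_{2m-1}`. Hence the identity
holds at every odd index where `s_{2m-1} ≠ 0`. For that, `U^m s_{2m-1}` is a polynomial in `T, U`
whose value at `(T, U) = (1, 0)` is `(-1)^m`.
-/

noncomputable section
namespace Paper
open MvPolynomial Finset

lemma b_two_mul (m : ℕ) : b (2 * m) = T := by simp [b, parity_simps]

lemma b_two_mul_add_one (m : ℕ) : b (2 * m + 1) = -(U⁻¹ * T) := by simp [b, parity_simps]

lemma Sd_two_mul_add_two (m : ℕ) : Sd (2 * m + 2) = T * Sd (2 * m + 1) + Sd (2 * m) := by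
  rw [Sd, b_two_mul]

lemma Sd_two_mul_add_three (m : ℕ) :
    Sd (2 * m + 3) = -(U⁻¹ * T) * Sd (2 * m + 2) + Sd (2 * m + 1) := by
  rw [Sd, b_two_mul_add_one]

lemma R_sub_T_mul_Sd_add_two (n : ℕ) :
    R (n + 2) - T * Sd (n + 2) = b n * (R (n + 1) - T * Sd (n + 1)) + (R n - T * Sd n) := by
  rw [R, Sd]
  ring

lemma R_sub_T_mul_Sd (m : ℕ) :
    R (2 * m + 1) - T * Sd (2 * m + 1) = Sd (2 * m) ∧
      R (2 * m + 2) - T * Sd (2 * m + 2) = -(U * Sd (2 * m + 1)) := by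
  induction m with
  | zero => simp [R, Sd, b]
  | succ m ih =>
    obtain ⟨h_odd, h_even⟩ := ih
    have h_odd' : R (2 * m + 3) - T * Sd (2 * m + 3) = Sd (2 * m + 2) := by
      rw [R_sub_T_mul_Sd_add_two, b_two_mul_add_one, h_even, h_odd, Sd_two_mul_add_two]
      field_simp [U_ne_zero]
    refine ⟨h_odd', ?_⟩
    change R (2 * (m + 1) + 2) - T * Sd (2 * (m + 1) + 2) = -(U * Sd (2 * m + 3))
    rw [R_sub_T_mul_Sd_add_two, b_two_mul, show 2 * (m + 1) + 1 = 2 * m + 3 by ring, h_odd',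
      show 2 * (m + 1) = 2 * m + 2 by ring, h_even, Sd_two_mul_add_three]
    field_simp [U_ne_zero]
    ring

/-- Two steps of the `Sd` recurrence, multiplied by `U` to clear the denominator of `b` at odd
indices, with `T = X 0` and `U = X 1`. -/
def scaledSd : ℕ → MvPolynomial (Fin 2) ℚ × MvPolynomial (Fin 2) ℚ
  | 0 => (0, 1)
  | m + 1 => ((X 1 - X 0 ^ 2) * (scaledSd m).1 - X 0 * (scaledSd m).2,
      X 0 * X 1 * (scaledSd m).1 + X 1 * (scaledSd m).2)

lemma algebraMap_scaledSd (m : ℕ) :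
    algebraMap _ K (scaledSd m).1 = U ^ m * Sd (2 * m + 1) ∧
      algebraMap _ K (scaledSd m).2 = U ^ m * Sd (2 * m) := by
  induction m with
  | zero => simp [scaledSd, Sd]
  | succ m ih =>
    obtain ⟨h_fst, h_snd⟩ := ih
    simp only [scaledSd, map_add, map_sub, map_mul, map_pow, h_fst, h_snd]
    change (U - T ^ 2) * _ - T * _ = _ ∧ T * U * _ + U * _ = _
    rw [show 2 * (m + 1) = 2 * m + 2 by ring, Sd_two_mul_add_three, Sd_two_mul_add_two]
    constructor
    · field_simp [U_ne_zero]
      ring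
    · ring

lemma eval_scaledSd_succ (m : ℕ) :
    eval ![1, 0] (scaledSd (m + 1)).1 = (-1) ^ (m + 1) ∧ eval ![1, 0] (scaledSd (m + 1)).2 = 0 := by
  induction m with
  | zero => simp [scaledSd]
  | succ m ih =>
    rw [scaledSd]
    simp [ih.1, ih.2, pow_succ]

lemma Sd_two_mul_add_one_ne_zero {m : ℕ} (hm : m ≠ 0) : Sd (2 * m + 1) ≠ 0 := by
  obtain ⟨m, rfl⟩ := Nat.exists_eq_add_one_of_ne_zero hm
  intro h_zero
  have h_poly : (scaledSd (m + 1)).1 = 0 := by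
    rw [← map_eq_zero_iff _ (IsFractionRing.injective (MvPolynomial (Fin 2) ℚ) K),
      (algebraMap_scaledSd _).1, h_zero, mul_zero]
  have h_eval := (eval_scaledSd_succ m).1
  rw [h_poly, map_zero] at h_eval
  exact pow_ne_zero _ (neg_ne_zero.2 one_ne_zero) h_eval.symm

lemma R_div_Sd_sub_T {m : ℕ} (hm : m ≠ 0) :
    R (2 * m + 1) / Sd (2 * m + 1) - T = Sd (2 * m) / Sd (2 * m + 1) := by
  rw [div_sub' (Sd_two_mul_add_one_ne_zero hm), ← (R_sub_T_mul_Sd m).1]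
  ring

theorem stmt_17_general (n : ℕ) :
    R (2 ^ n + 1) / Sd (2 ^ n + 1) - T = Sd (2 ^ n) / Sd (2 ^ n + 1) := by
  cases n with
  | zero => simp [R, Sd, b]
  | succ n =>
    rw [pow_succ']
    exact R_div_Sd_sub_T (pow_ne_zero n two_ne_zero)

/-- `r_{2^n-1}/s_{2^n-1} - T = s_{2^n-2}/s_{2^n-1}` for `n ≥ 1`, stated with the
index shift `R k = r_{k-2}`, `Sd k = s_{k-2}`. -/
theorem stmt_17 (n : ℕ) (hn : 1 ≤ n) :
    R (2 ^ n + 1) / Sd (2 ^ n + 1) - T = Sd (2 ^ n) / Sd (2 ^ n + 1) :=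
  stmt_17_general n

end Paper
end
end

section
/- Let t ≥ 3 be an integer and define g₀(t) := t, g_{m+1}(t) := g_m(t)² - 2. Then (t - √(t² - 4))/2 = Σ_{m≥0} 1/(g₀(t) g₁(t) ⋯ g_m(t)). -/
open Finset Filter Topology

/-- Sierpinski's identity: for an integer `t ≥ 3` and `g₀ = t`, `g_{m+1} = g_m² - 2`,
`(t - √(t² - 4))/2 = Σ_{m≥0} 1/(g₀ g₁ ⋯ g_m)`. -/
theorem stmt_18 (t : ℤ) (ht : 3 ≤ t) (g : ℕ → ℝ) (hg0 : g 0 = (t : ℝ))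
    (hg : ∀ m, g (m + 1) = g m ^ 2 - 2) :
    ((t : ℝ) - Real.sqrt ((t : ℝ) ^ 2 - 4)) / 2 =
      ∑' m : ℕ, 1 / ∏ k ∈ Finset.range (m + 1), g k := by
  have ht3 : (3 : ℝ) ≤ (t : ℝ) := by exact_mod_cast ht
  set s : ℝ := Real.sqrt ((t : ℝ) ^ 2 - 4) with hs
  have hs0 : 0 ≤ s := Real.sqrt_nonneg _
  have hs2 : s ^ 2 = (t : ℝ) ^ 2 - 4 := Real.sq_sqrt (by nlinarith)
  clear_value s
  set ρ : ℝ := ((t : ℝ) + s) / 2 with hρ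
  have hρ1 : (1 : ℝ) < ρ := by rw [hρ]; nlinarith
  have hρpos : (0 : ℝ) < ρ := lt_trans one_pos hρ1
  have hρ0 : ρ ≠ 0 := ne_of_gt hρpos
  have hmul : (((t : ℝ) - s) / 2) * ρ = 1 := by
    rw [hρ]; nlinarith [hs2]
  have hinv : ((t : ℝ) - s) / 2 = ρ⁻¹ := eq_inv_of_mul_eq_one_left hmul
  clear_value ρ
  -- closed form for g
  have hgm : ∀ m, g m = ρ ^ (2 ^ m) + (ρ ^ (2 ^ m))⁻¹ := by
    intro m
    induction m with
    | zero =>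
      simp only [pow_zero, pow_one, hg0]
      rw [← hinv, hρ]; ring
    | succ m ih =>
      have ha : ρ ^ (2 ^ m) ≠ 0 := pow_ne_zero _ hρ0
      have h2 : ρ ^ (2 ^ (m + 1)) = (ρ ^ (2 ^ m)) ^ 2 := by
        rw [← pow_mul, pow_succ]
      rw [hg m, ih, h2]
      field_simp
      ring
  have hapow : ∀ n : ℕ, (1 : ℝ) < ρ ^ n → True := fun _ _ => trivial
  have hb : ∀ m : ℕ, (1 : ℝ) < ρ ^ (2 ^ m) := fun m =>
    one_lt_pow₀ hρ1 (by positivity)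
  have hgpos : ∀ k, 0 < g k := by
    intro k
    rw [hgm k]
    positivity
  have hppos : ∀ m, 0 < ∏ k ∈ Finset.range (m + 1), g k :=
    fun m => Finset.prod_pos fun k _ => hgpos k
  set c : ℝ := ρ - ρ⁻¹ with hc
  have hcpos : 0 < c := by
    rw [hc]
    have : ρ⁻¹ < 1 := inv_lt_one_of_one_lt₀ hρ1
    linarith
  clear_value c
  set f : ℕ → ℝ := fun n => c / (ρ ^ (2 ^ (n + 1)) - 1) with hf
  clear_value f
  -- product formula
  have hprod : ∀ m, ∏ k ∈ Finset.range (m + 1), g k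
      = (ρ ^ (2 ^ (m + 1)) - (ρ ^ (2 ^ (m + 1)))⁻¹) / c := by
    intro m
    induction m with
    | zero =>
      simp only [Nat.zero_add, Finset.prod_range_one, hgm 0]
      have h2 : ρ ^ (2 ^ 1) = (ρ ^ (2 ^ 0)) ^ 2 := by rw [← pow_mul, pow_succ]
      rw [h2]
      have : ρ ^ (2 ^ 0) = ρ := by norm_num
      rw [this, hc]
      have h1 : ρ - ρ⁻¹ ≠ 0 := by
        have := hcpos; rw [hc] at this; linarith
      have h3 : ρ ^ 2 - 1 ≠ 0 := by nlinarith
      rw [eq_div_iff h1]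
      field_simp
      ring
    | succ m ih =>
      rw [Finset.prod_range_succ, ih, hgm (m + 1)]
      have ha : ρ ^ (2 ^ (m + 1)) ≠ 0 := pow_ne_zero _ hρ0
      have h2 : ρ ^ (2 ^ (m + 2)) = (ρ ^ (2 ^ (m + 1))) ^ 2 := by
        rw [← pow_mul, pow_succ]
      have hcne : c ≠ 0 := ne_of_gt hcpos
      rw [h2]
      field_simp
      ring
  -- telescoping identity
  have hterm : ∀ m, 1 / ∏ k ∈ Finset.range (m + 1), g k = f m - f (m + 1) := by
    intro m
    have hb1 : (1 : ℝ) < ρ ^ (2 ^ (m + 1)) := hb (m + 1)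
    have h2 : ρ ^ (2 ^ (m + 1 + 1)) = (ρ ^ (2 ^ (m + 1))) ^ 2 := by
      rw [← pow_mul, pow_succ]
    rw [hprod m]
    simp only [hf, h2]
    set b : ℝ := ρ ^ (2 ^ (m + 1)) with hbb
    clear_value b
    have hb0 : b ≠ 0 := by positivity
    have hb1' : b - 1 ≠ 0 := by nlinarith
    have hb2' : b ^ 2 - 1 ≠ 0 := by nlinarith
    have hbinv : b - b⁻¹ ≠ 0 := by
      have : b⁻¹ < 1 := inv_lt_one_of_one_lt₀ hb1
      intro h; nlinarith [sub_eq_zero.mp h]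
    have hcne : c ≠ 0 := ne_of_gt hcpos
    rw [one_div, inv_div, div_sub_div _ _ hb1' hb2',
      div_eq_div_iff hbinv (mul_ne_zero hb1' hb2')]
    field_simp
    ring
  -- partial sums
  have hpart : ∀ n, ∑ m ∈ Finset.range n, (1 / ∏ k ∈ Finset.range (m + 1), g k)
      = f 0 - f n := by
    intro n
    calc ∑ m ∈ Finset.range n, (1 / ∏ k ∈ Finset.range (m + 1), g k)
        = ∑ m ∈ Finset.range n, (f m - f (m + 1)) := by
          exact Finset.sum_congr rfl fun m _ => hterm m
      _ = f 0 - f n := Finset.sum_range_sub' f n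
  -- limit of f
  have hflim : Tendsto f atTop (𝓝 0) := by
    have h1 : Tendsto (fun n : ℕ => ρ ^ (2 ^ (n + 1))) atTop atTop := by
      have hpow : Tendsto (fun k : ℕ => ρ ^ k) atTop atTop :=
        tendsto_pow_atTop_atTop_of_one_lt hρ1
      have hexp : Tendsto (fun n : ℕ => 2 ^ (n + 1)) atTop atTop :=
        tendsto_atTop_mono (fun n => (Nat.lt_two_pow_self (n := n + 1)).le.trans (le_of_eq rfl) |>.trans' (Nat.le_succ n)) tendsto_id
      exact hpow.comp hexp
    have h2 : Tendsto (fun n : ℕ => ρ ^ (2 ^ (n + 1)) - 1) atTop atTop :=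
      tendsto_atTop_add_const_right _ (-1) h1 |>.congr (by intro n; ring)
    have h3 : Tendsto (fun n : ℕ => (ρ ^ (2 ^ (n + 1)) - 1)⁻¹) atTop (𝓝 0) :=
      h2.inv_tendsto_atTop
    have h4 := h3.const_mul c
    simpa [hf, div_eq_mul_inv] using h4
  -- f 0 = ρ⁻¹
  have hf0 : f 0 = ρ⁻¹ := by
    rw [hf]
    have : ρ ^ (2 ^ 1) = ρ ^ 2 := by norm_num
    simp only [this, hc]
    have h1 : ρ ^ 2 - 1 ≠ 0 := by nlinarith
    field_simp
  -- conclude via HasSum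
  have hsum : HasSum (fun m : ℕ => 1 / ∏ k ∈ Finset.range (m + 1), g k) ρ⁻¹ := by
    rw [hasSum_iff_tendsto_nat_of_nonneg
      (fun m => le_of_lt (by have := hppos m; positivity)), ← hf0]
    have h5 : Tendsto (fun n : ℕ => f 0 - f n) atTop (𝓝 (f 0)) := by
      simpa using tendsto_const_nhds.sub hflim
    exact h5.congr fun n => (hpart n).symm
  rw [hsum.tsum_eq, hinv]
end

section
/- Let u be a complex number with u^6 = 1 and t an Eisenstein integer with |t| > 2 (i.e., t ∉ {z ∈ Z[ω] : |z| ≤ 2} where ω = (1+√-3)/2). Let α = (t/2)(1 - √(1 - 4u/t²)) be the smaller root of X² - tX + u (principal square root) and F(z) = (z² - u)/(2z - t) the Newton map. Then for all n ≥ 1, |α - F^{(n)}(0)| < 2/ρ^{2^{n+1} - 1}, where ρ = (|t| + √(|t|² - 4))/2 > 1. -/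
private lemma real_key_stmt19 (ρ B : ℝ) (k : ℕ) (hρ : 8/5 ≤ ρ) (hρB : ρ ≤ B) (hk : 4 ≤ k) :
    1 / B ^ k * ((B + 1/B) / (1 - 1/B^k)) < 2 / ρ ^ (k-1) := by
  have hB : (8:ℝ)/5 ≤ B := le_trans hρ hρB
  have hB1 : (1:ℝ) < B := by linarith
  have hB0 : (0:ℝ) < B := by linarith
  have hρ0 : (0:ℝ) < ρ := by linarith
  set C := B ^ (k-1) with hCdef
  have hC3 : B ^ 3 ≤ C := pow_le_pow_right₀ (le_of_lt hB1) (by omega)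
  have hPC : B ^ k = C * B := by rw [hCdef, ← pow_succ]; congr 1; omega
  have hC0 : (0:ℝ) < C := pow_pos hB0 _
  have hQC : ρ ^ (k-1) ≤ C := pow_le_pow_left₀ (le_of_lt hρ0) hρB _
  have hQ0 : (0:ℝ) < ρ ^ (k-1) := pow_pos hρ0 _
  have hP1 : (1:ℝ) < B ^ k := one_lt_pow₀ hB1 (by omega)
  have hP0 : (0:ℝ) < B ^ k := pow_pos hB0 _
  have h1 : 1 / B ^ k * ((B + 1/B) / (1 - 1/B^k)) = (B^2 + 1) / (B * (B^k - 1)) := by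
    rw [hPC]; field_simp
  rw [h1, hPC, div_lt_div_iff₀ (by nlinarith) hQ0]
  have hB2 : (64:ℝ)/25 ≤ B^2 := by nlinarith
  have h2 : (B^2+1) * ρ^(k-1) ≤ (B^2+1) * C := by
    apply mul_le_mul_of_nonneg_left hQC (by positivity)
  have h3 : B^3 * (B^2 - 1) ≤ C * (B^2 - 1) := by
    apply mul_le_mul_of_nonneg_right hC3 (by nlinarith)
  nlinarith [sq_nonneg B, sq_nonneg (B-1)]

private lemma aux1_stmt19 (A B : ℝ) (hB0 : 0 ≤ B) (hAB : A * B = 1) (hAleB : A ≤ B) :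
    1 ≤ B := by nlinarith

private lemma aux2_stmt19 (T ρ B : ℝ) (hρ0 : 0 < ρ) (hρ1 : 1 < ρ)
    (hρ2 : ρ^2 - T*ρ + 1 = 0) (hB1 : 1 ≤ B) (hTB : T ≤ 1/B + B) : ρ ≤ B := by
  have hB0 : (0:ℝ) < B := by linarith
  have hq : 0 ≤ B^2 - T*B + 1 := by
    have := mul_le_mul_of_nonneg_right hTB (le_of_lt hB0)
    have h1 : (1/B + B) * B = 1 + B^2 := by field_simp
    nlinarith
  by_contra hlt
  push_neg at hlt
  have h1 : 0 < ρ - B := by linarith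
  have h2 : 0 < B - 1/ρ := by
    have : 1/ρ < 1 := by rw [div_lt_one hρ0]; linarith
    linarith
  have h3 := mul_pos h1 h2
  have h4 : (ρ - B) * (B - 1/ρ) * ρ = (ρ^2 - T*ρ + 1) * B - ρ * (B^2 - T*B + 1) := by
    field_simp
    nlinarith [hρ2]
  nlinarith [mul_pos h3 hρ0]

set_option maxHeartbeats 2000000 in
/-- For `u⁶ = 1` and an Eisenstein integer `t` (i.e. `t = a + bω`, `ω = (1 + √-3)/2`,
`a, b ∈ ℤ`) with `|t| > 2`, the Newton iterates `F^[n] 0` of `F(z) = (z² - u)/(2z - t)`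
approximate the smaller root `α = (t/2)(1 - √(1 - 4u/t²))` of `X² - tX + u` with
`|α - F^[n](0)| < 2/ρ^(2^(n+1)-1)` for `n ≥ 1`, where `ρ = (|t| + √(|t|²-4))/2 > 1`. -/
theorem stmt_19 (u : ℂ) (hu : u ^ 6 = 1) (t : ℂ)
    (ht : ∃ a b : ℤ, t = (a : ℂ) + (b : ℂ) * ((1 + Real.sqrt 3 * Complex.I) / 2))
    (habs : 2 < ‖t‖)
    (α : ℂ) (hα : α = t / 2 * (1 - (1 - 4 * u / t ^ 2) ^ ((1 : ℂ) / 2)))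
    (F : ℂ → ℂ) (hF : ∀ z, F z = (z ^ 2 - u) / (2 * z - t))
    (ρ : ℝ) (hρ : ρ = (‖t‖ + Real.sqrt (‖t‖ ^ 2 - 4)) / 2) :
    1 < ρ ∧ ∀ n : ℕ, 1 ≤ n →
      ‖α - F^[n] 0‖ < 2 / ρ ^ (2 ^ (n + 1) - 1) := by
  obtain ⟨a, b, hab⟩ := ht
  set T := ‖t‖ with hTdef
  have hT0 : (0:ℝ) ≤ T := norm_nonneg t
  have ht0 : t ≠ 0 := by
    intro h; rw [hTdef, h] at habs; simp at habs; linarith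
  -- |u| = 1
  have hu0 : u ≠ 0 := by
    intro h; rw [h] at hu; norm_num at hu
  have hu6 : ‖u‖ ^ 6 = 1 := by rw [← norm_pow, hu, norm_one]
  have hun : (0:ℝ) ≤ ‖u‖ := norm_nonneg u
  have hu1 : ‖u‖ = 1 := by
    nlinarith [sq_nonneg (‖u‖ - 1), sq_nonneg (‖u‖ + 1),
      sq_nonneg (‖u‖ ^ 2 - 1), sq_nonneg (‖u‖ ^ 3 - 1)]
  -- |t|² ≥ 5
  have hre : t.re = (a:ℝ) + b/2 := by
    simp [hab, Complex.add_re, Complex.mul_re, Complex.div_re, Complex.add_im,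
      Complex.normSq, Complex.mul_im]
    ring
  have him : t.im = b * Real.sqrt 3 / 2 := by
    simp [hab, Complex.add_im, Complex.mul_im, Complex.div_im, Complex.add_re,
      Complex.normSq, Complex.mul_re]
    ring
  have h3 : Real.sqrt 3 ^ 2 = 3 := Real.sq_sqrt (by norm_num)
  have hT2eq : T ^ 2 = ((a^2 + a*b + b^2 : ℤ) : ℝ) := by
    rw [hTdef, Complex.sq_norm, Complex.normSq_apply, hre, him]
    push_cast
    nlinarith [h3]
  have h4 : (4:ℝ) < ((a^2 + a*b + b^2 : ℤ) : ℝ) := by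
    rw [← hT2eq]; nlinarith
  have h4i : (4:ℤ) < a^2 + a*b + b^2 := by exact_mod_cast h4
  have hT5 : (5:ℝ) ≤ T ^ 2 := by
    rw [hT2eq]; exact_mod_cast (by omega : (5:ℤ) ≤ a^2 + a*b + b^2)
  have hT22 : (11:ℝ)/5 ≤ T := by nlinarith
  -- ρ facts
  have hsqT : Real.sqrt (T^2 - 4) ^ 2 = T^2 - 4 := Real.sq_sqrt (by nlinarith)
  have hsq1 : (1:ℝ) ≤ Real.sqrt (T^2 - 4) := by
    have h := Real.sqrt_le_sqrt (show (1:ℝ) ≤ T^2 - 4 by nlinarith)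
    rwa [Real.sqrt_one] at h
  have hρ85 : (8:ℝ)/5 ≤ ρ := by rw [hρ]; linarith
  have hρ1 : (1:ℝ) < ρ := by linarith
  have hρ0 : (0:ℝ) < ρ := by linarith
  have hρ2 : ρ^2 - T*ρ + 1 = 0 := by
    rw [hρ]; linear_combination (1/4) * hsqT
  -- complex square root facts
  set z := 1 - 4 * u / t ^ 2 with hzdef
  have hz : z ≠ 0 := by
    intro h
    rw [hzdef, sub_eq_zero] at h
    have h4u : t ^ 2 = 4 * u := by
      field_simp at h
      linear_combination h
    have habs4 : ‖t^2‖ = ‖4*u‖ := by rw [h4u]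
    rw [norm_pow, norm_mul, hu1, ← hTdef] at habs4
    simp at habs4
    linarith
  set s := z ^ ((1:ℂ) / 2) with hsdef
  have hs2 : s * s = z := by
    rw [hsdef, ← Complex.cpow_add _ _ hz]
    norm_num
  have hs0 : s ≠ 0 := by
    intro h; rw [h, mul_zero] at hs2; exact hz hs2.symm
  have hsre : 0 ≤ s.re := by
    rw [hsdef, one_div, Complex.cpow_inv_two_re]
    exact Real.sqrt_nonneg _
  set β := t - α with hβdef
  have hαβ : α * β = u := by
    have hz' : t ^ 2 * z = t ^ 2 - 4 * u := by rw [hzdef]; field_simp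
    rw [hβdef, hα]
    linear_combination (-(t^2)/4) * hs2 + (-1/4 : ℂ) * hz'
  have hβform : β = t/2 * (1 + s) := by rw [hβdef, hα]; ring
  set A := ‖α‖ with hAdef
  set B := ‖β‖ with hBdef
  clear_value T z s β A B
  have hA0 : (0:ℝ) ≤ A := hAdef ▸ norm_nonneg α
  have hB0' : (0:ℝ) ≤ B := hBdef ▸ norm_nonneg β
  have hABu : A * B = 1 := by rw [hAdef, hBdef, ← norm_mul, hαβ, hu1]
  have hAleB : A ≤ B := by
    have h1s : ‖1 - s‖ ≤ ‖1 + s‖ := by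
      have e : Complex.normSq (1 - s) ≤ Complex.normSq (1 + s) := by
        simp only [Complex.normSq_apply, Complex.add_re, Complex.sub_re, Complex.add_im,
          Complex.sub_im, Complex.one_re, Complex.one_im]
        nlinarith [hsre]
      rw [Complex.norm_def, Complex.norm_def]
      exact Real.sqrt_le_sqrt e
    rw [hAdef, hBdef, hα, hβform, norm_mul, norm_mul]
    exact mul_le_mul_of_nonneg_left h1s (norm_nonneg _)
  have hB1 : (1:ℝ) ≤ B := aux1_stmt19 A B hB0' hABu hAleB
  have hB0 : (0:ℝ) < B := by linarith
  have hAeq : A = 1/B := by rw [eq_div_iff (ne_of_gt hB0)]; exact hABu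
  have hsum : α + β = t := by rw [hβdef]; ring
  have hTAB : T ≤ A + B := by
    calc T = ‖α + β‖ := by rw [hsum, hTdef]
    _ ≤ A + B := by rw [hAdef, hBdef]; exact norm_add_le α β
  have hBρ : ρ ≤ B := by
    apply aux2_stmt19 T ρ B hρ0 hρ1 hρ2 hB1
    rw [hAeq] at hTAB
    exact hTAB
  have hBgt1 : (1:ℝ) < B := by linarith
  have hβ0 : β ≠ 0 := by
    intro h
    rw [hBdef, h] at hB0
    simp at hB0
  have hkey : ∀ n : ℕ, F^[n] 0 - β ≠ 0 ∧
      (F^[n] 0 - α) / (F^[n] 0 - β) = (α / β) ^ (2 ^ n) := by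
    intro n
    induction n with
    | zero =>
      refine ⟨by simpa using hβ0, ?_⟩
      simp only [Function.iterate_zero, id_eq, zero_sub, neg_div_neg_eq, pow_zero, pow_one]
    | succ n ih =>
      obtain ⟨hxb, hw⟩ := ih
      set x := F^[n] 0 with hx
      clear_value x
      have hABlt : A / B < 1 := by
        rw [div_lt_one hB0, hAeq]
        have : 1/B ≤ 1 := by rw [div_le_one hB0]; linarith
        linarith
      have hwabs : ‖(x - α)/(x - β)‖ < 1 := by
        rw [hw, norm_pow, norm_div, ← hAdef, ← hBdef]
        exact pow_lt_one₀ (by positivity) hABlt (by positivity)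
      have hd : 2*x - t ≠ 0 := by
        intro h
        have hxα : x - α = -(x - β) := by linear_combination h - hsum
        have : ‖(x - α)/(x - β)‖ = 1 := by
          rw [hxα, neg_div, norm_neg, div_self hxb]
          simp
        linarith
      have hFα : F x - α = (x - α)^2 / (2*x - t) := by
        rw [hF, eq_div_iff hd, sub_mul, div_mul_cancel₀ _ hd]
        linear_combination hαβ - α * hβdef
      have hFβ : F x - β = (x - β)^2 / (2*x - t) := by
        rw [hF, eq_div_iff hd, sub_mul, div_mul_cancel₀ _ hd]
        linear_combination hαβ - β * hβdef
      constructor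
      · rw [Function.iterate_succ_apply', ← hx, hFβ]
        exact div_ne_zero (pow_ne_zero 2 hxb) hd
      · rw [Function.iterate_succ_apply', ← hx, hFα, hFβ, div_div_div_comm,
          div_self hd, div_one, ← div_pow, hw, ← pow_mul, ← pow_succ]
  refine ⟨hρ1, ?_⟩
  intro n hn
  obtain ⟨hxb, hw⟩ := hkey n
  set x := F^[n] 0 with hx
  clear_value x
  set k := 2^(n+1) with hk
  have hk4 : 4 ≤ k := by
    rw [hk]
    calc (4:ℕ) = 2^2 := rfl
    _ ≤ 2^(n+1) := Nat.pow_le_pow_right (by norm_num) (by omega)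
  have hkk : 2 * 2^n = k := by rw [hk, pow_succ]; ring
  have hBk1 : (1:ℝ) < B^k := one_lt_pow₀ hBgt1 (by omega)
  have hBk0 : (0:ℝ) < B^k := by positivity
  have hm1 : 1/B^k < 1 := by rw [div_lt_one hBk0]; linarith
  have hm0 : (0:ℝ) < 1/B^k := by positivity
  have habsw : ‖(x - α)/(x - β)‖ = 1/B^k := by
    rw [hw, norm_pow, norm_div, ← hAdef, ← hBdef, hAeq, div_div, ← pow_two,
      div_pow, one_pow, ← pow_mul, hkk]
  have hxα : x - α = ((x - α)/(x - β)) * (x - β) := (div_mul_cancel₀ _ hxb).symm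
  have heq : (α - x) * (1 - (x - α)/(x - β)) = ((x - α)/(x - β)) * (β - α) := by
    linear_combination -hxα
  have habseq : ‖α - x‖ * ‖1 - (x - α)/(x - β)‖
      = (1/B^k) * ‖β - α‖ := by
    rw [← norm_mul, heq, norm_mul, habsw]
  have h1w : 1 - 1/B^k ≤ ‖1 - (x - α)/(x - β)‖ := by
    have h := norm_add_le (1 - (x - α)/(x - β)) ((x - α)/(x - β))
    simp only [sub_add_cancel, norm_one] at h
    rw [habsw] at h
    linarith
  have h1w0 : 0 < ‖1 - (x - α)/(x - β)‖ := by linarith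
  have hβα : ‖β - α‖ ≤ B + 1/B := by
    rw [sub_eq_add_neg]
    refine le_trans (norm_add_le _ _) ?_
    rw [norm_neg, ← hAdef, ← hBdef, hAeq]
  have habs_eq : ‖α - x‖
      = 1/B^k * (‖β - α‖ / ‖1 - (x - α)/(x - β)‖) := by
    rw [mul_div_assoc'] at *
    rw [eq_div_iff (ne_of_gt h1w0)]
    exact habseq
  calc ‖α - x‖
      = 1/B^k * (‖β - α‖ / ‖1 - (x - α)/(x - β)‖) := habs_eq
    _ ≤ 1/B^k * ((B + 1/B) / (1 - 1/B^k)) := by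
        apply mul_le_mul_of_nonneg_left _ (le_of_lt hm0)
        apply div_le_div₀ (by positivity) hβα (by linarith) h1w
    _ < 2 / ρ ^ (k-1) := real_key_stmt19 ρ B k hρ85 hBρ hk4
end
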